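/- arXiv:1906.04325 — 6 statements merged into one kernel-verified Lean document; each statement's English description precedes it below -/
import Mathlib

section
/- Let k ≥ 2 be an integer, let x_1, …, x_{k-1} be k−1 integers each coprime with k, and let m be any integer. Then there exists a subset Z ⊆ {1, …, k−1} such that m ≡ ∑_{i∈Z} x_i (mod k). -/
/-!
Add the `x i` one at a time and watch the set `S` of subset sums modulo `k`. Adjoining `x`
replaces `S` by `S ∪ (x + S)`. Either this set is larger than `S`, or `x + S ⊆ S`; in the latter
case `x` stabilizes the finite set `S`, hence so does the subgroup generated by `x`, which is all
of `ZMod k` because `x` is a unit, and so `S` is everything. Starting from `{0}`, after `k - 1`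
steps `S` has `k` elements.
-/

open Finset AddSubgroup AddAction
open scoped Pointwise

section SubsetSums

variable {ι G : Type*} [AddCommGroup G] [DecidableEq G]

def subsetSums (s : Finset ι) (f : ι → G) : Finset G :=
  s.powerset.image fun Z => ∑ i ∈ Z, f i

lemma zero_mem_subsetSums (s : Finset ι) (f : ι → G) : 0 ∈ subsetSums s f :=
  mem_image.mpr ⟨∅, empty_mem_powerset s, sum_empty⟩

lemma subsetSums_insert [DecidableEq ι] {s : Finset ι} {i : ι} (hi : i ∉ s) (f : ι → G) :
    subsetSums (insert i s) f = subsetSums s f ∪ (f i +ᵥ subsetSums s f) := by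
  rw [subsetSums, powerset_insert, image_union, image_image, subsetSums, ← image_vadd,
    image_image]
  congr 1
  exact image_congr fun Z hZ => sum_insert fun h => hi (mem_powerset.mp hZ h)

lemma eq_univ_of_vadd_finset_subset [Fintype G] {A : Finset G} {g : G}
    (hg : zmultiples g = ⊤) (hA : A.Nonempty) (hgA : g +ᵥ A ⊆ A) : A = univ := by
  have hstab : stabilizer G A = ⊤ := top_le_iff.mp <|
    hg ▸ zmultiples_le_of_mem (mem_stabilizer_finset_iff_vadd_finset_subset.mpr hgA)
  obtain ⟨a, ha⟩ := hA
  refine eq_univ_of_forall fun t => ?_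
  have hta : t - a ∈ stabilizer G A := hstab ▸ mem_top (t - a)
  simpa only [vadd_eq_add, sub_add_cancel] using mem_stabilizer_finset'.mp hta ha

lemma min_card_le_card_subsetSums [Fintype G] [DecidableEq ι] (s : Finset ι) {f : ι → G}
    (hf : ∀ i ∈ s, zmultiples (f i) = ⊤) :
    min (#s + 1) (Fintype.card G) ≤ #(subsetSums s f) := by
  induction s using Finset.induction_on with
  | empty => simp [subsetSums]
  | insert i s hi ih =>
    rw [subsetSums_insert hi, card_insert_of_notMem hi]
    have ih := ih fun j hj => hf j (mem_insert_of_mem hj)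
    by_cases hclosed : f i +ᵥ subsetSums s f ⊆ subsetSums s f
    · have huniv := eq_univ_of_vadd_finset_subset (hf i (mem_insert_self i s))
        ⟨0, zero_mem_subsetSums s f⟩ hclosed
      rw [huniv, union_eq_left.mpr (subset_univ _), card_univ]
      exact min_le_right _ _
    · set T := subsetSums s f ∪ (f i +ᵥ subsetSums s f)
      have hgrow : #(subsetSums s f) < #T := card_lt_card (left_lt_sup.mpr hclosed)
      have := card_le_univ T
      omega

lemma subsetSums_eq_univ [Fintype G] {s : Finset ι} {f : ι → G}
    (hs : Fintype.card G ≤ #s + 1) (hf : ∀ i ∈ s, zmultiples (f i) = ⊤) :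
    subsetSums s f = univ := by
  classical
  have := min_card_le_card_subsetSums s hf
  exact eq_univ_of_card _ (le_antisymm (card_le_univ _) (by omega))

end SubsetSums

lemma ZMod.zmultiples_eq_top_of_isUnit {n : ℕ} {u : ZMod n} (hu : IsUnit u) :
    zmultiples u = ⊤ := by
  refine eq_top_iff.mpr fun t _ => mem_zmultiples_iff.mpr ⟨(t * ↑hu.unit⁻¹ : ZMod n).cast, ?_⟩
  rw [zsmul_eq_mul, ZMod.intCast_zmod_cast, mul_assoc, hu.val_inv_mul, mul_one]

/-- Chowla's lemma: if `k ≥ 2` and `x 1, …, x (k-1)` are integers coprime with `k`,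
then every residue `m` modulo `k` is a subset sum of the `x i` modulo `k`. -/
theorem chowla_subset_sum (k : ℕ) (hk : 2 ≤ k) (x : Fin (k - 1) → ℤ)
    (hx : ∀ i, IsCoprime (x i) (k : ℤ)) (m : ℤ) :
    ∃ Z : Finset (Fin (k - 1)), m ≡ ∑ i ∈ Z, x i [ZMOD (k : ℤ)] := by
  have : NeZero k := ⟨by omega⟩
  have hgen (i) (_ : i ∈ univ) : zmultiples (x i : ZMod k) = ⊤ :=
    ZMod.zmultiples_eq_top_of_isUnit (ZMod.unitOfIsCoprime _ (hx i)).isUnit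
  have hcard : Fintype.card (ZMod k) ≤ #(univ : Finset (Fin (k - 1))) + 1 := by
    rw [ZMod.card, card_univ, Fintype.card_fin]
    omega
  obtain ⟨Z, -, hZ⟩ := mem_image.mp (subsetSums_eq_univ hcard hgen ▸ mem_univ (m : ZMod k))
  refine ⟨Z, (ZMod.intCast_eq_intCast_iff _ _ _).mp ?_⟩
  push_cast
  exact hZ.symm
end

section
/- Every bipartite multigraph G can be edge-decomposed into k spanning subgraphs G_1, …, G_k such that for each vertex v and each i, |d_{G_i}(v) − d_G(v)/k| < 1, i.e., ⌊d_G(v)/k⌋ ≤ d_{G_i}(v) ≤ ⌈d_G(v)/k⌉. -/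
open Finset

variable {V E : Type*}

/-- Degree of `v` in the sub-multigraph given by the edge set `S`,
where `ends e` gives the two endpoints of edge `e` (loops count twice). -/
def mdeg [DecidableEq V] (ends : E → V × V) (S : Finset E) (v : V) : ℕ :=
  (S.filter fun e => (ends e).1 = v).card + (S.filter fun e => (ends e).2 = v).card

/-- Number of edges with exactly one end in the vertex set `X`. -/
def cutCard [Fintype E] [DecidableEq V] (ends : E → V × V) (X : Finset V) : ℕ :=
  (univ.filter fun e : E =>
    ((ends e).1 ∈ X ∧ (ends e).2 ∉ X) ∨ ((ends e).1 ∉ X ∧ (ends e).2 ∈ X)).card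

/-- `lam`-edge-connectedness: every edge cut has at least `lam` edges. -/
def EdgeConn [Fintype V] [Fintype E] [DecidableEq V] (ends : E → V × V) (lam : ℕ) : Prop :=
  ∀ X : Finset V, X.Nonempty → X ≠ univ → lam ≤ cutCard ends X

/-!
Orient every edge from one side of the bipartition to the other. Number the edges at each
vertex `v` and split `v` into copies, the `j`-th copy receiving the edges numbered
`jk, …, jk + k - 1`; the split multigraph is bipartite of maximum degree `≤ k`, so by König's
theorem (pad to a `k`-regular multigraph and peel off perfect matchings, which exist by Hall)
it has a proper `k`-edge-colouring. Every colour then occurs exactly once at each of the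
`⌊d(v)/k⌋` full copies of `v` and at most once at each of the `⌈d(v)/k⌉` copies.

A bipartite multigraph is given by two maps `a b : E → V`, the edge `e` joining `a e` in the
left copy of `V` to `b e` in the right one; `c` is a proper colouring when `e ↦ (a e, c e)`
and `e ↦ (b e, c e)` are injective.
-/

lemma abs_sub_div_lt_one_of_mem_Icc {n d k : ℕ} (hk : 0 < k)
    (hn : n ∈ Set.Icc (d / k) ((d + k - 1) / k)) : |(n : ℝ) - d / k| < 1 := by
  have hlo : (d : ℝ) < (n + 1) * k := by
    exact_mod_cast (Nat.div_lt_iff_lt_mul hk).1 (Nat.lt_succ_of_le hn.1)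
  have hhi : (n : ℝ) * k < d + k := by
    exact_mod_cast ((Nat.le_div_iff_mul_le hk).1 hn.2).trans_lt (by omega)
  have hk' : (0 : ℝ) < k := Nat.cast_pos.2 hk
  rw [show (n : ℝ) - d / k = (n * k - d) / k by field_simp, abs_div, abs_of_pos hk',
    div_lt_one hk', abs_lt]
  constructor <;> linarith

lemma div_eq_iff_mem_Ico {x k j : ℕ} (hk : 0 < k) :
    x / k = j ↔ x ∈ Ico (j * k) (j * k + k) := by
  rw [Nat.div_eq_iff hk, mem_Ico]
  omega

lemma card_filter_comp_equiv [Fintype E] {F : Type*} [Fintype F] (φ : E ≃ F) (p : F → Prop)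
    [DecidablePred p] : #{e | p (φ e)} = #{y | p y} := by
  simp only [card_filter]
  exact φ.sum_comp fun y => if p y then 1 else 0

lemma exists_image_eq_range (s : Finset E) : ∃ r : E → ℕ, s.image r = range #s := by
  classical
  refine ⟨fun e => if h : e ∈ s then s.equivFin ⟨e, h⟩ else 0, ?_⟩
  ext x
  simp only [mem_image, mem_range]
  constructor
  · rintro ⟨e, he, rfl⟩
    simp [he]
  · intro hx
    exact ⟨s.equivFin.symm ⟨x, hx⟩, by simp⟩

lemma card_filter_div_eq_le {s : Finset E} {r : E → ℕ} (hr : s.image r = range #s) {k : ℕ}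
    (hk : 0 < k) (j : ℕ) : #{e ∈ s | r e / k = j} ≤ k := by
  have hinj : Set.InjOn r s := injOn_of_card_image_eq (by rw [hr, card_range])
  calc #{e ∈ s | r e / k = j}
      ≤ #(Ico (j * k) (j * k + k)) :=
        card_le_card_of_injOn r (fun e he => (div_eq_iff_mem_Ico hk).1 (mem_filter.1 he).2)
          (hinj.mono (filter_subset _ s))
    _ = k := by simp

lemma exists_mem_filter_div_eq_of_lt {s : Finset E} {r : E → ℕ} (hr : s.image r = range #s)
    {k j : ℕ} (hj : j < #s / k) {c : E → Fin k}
    (hc : Set.InjOn c (s.filter fun e => r e / k = j)) (i : Fin k) :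
    ∃ e ∈ s, r e / k = j ∧ c e = i := by
  have hk : 0 < k := Nat.pos_of_ne_zero fun h => by simp [h] at hj
  have hblock : k ≤ #{e ∈ s | r e / k = j} := by
    calc k = #(Ico (j * k) (j * k + k)) := by simp
      _ ≤ _ := card_le_card_of_surjOn r fun x hx => ?_
    have hxs : x < #s := by
      have := (Nat.le_div_iff_mul_le hk).1 hj
      rw [coe_Ico, Set.mem_Ico] at hx
      rw [Nat.succ_mul] at this
      omega
    obtain ⟨e, he, rfl⟩ := mem_image.1 (hr ▸ mem_range.2 hxs : x ∈ s.image r)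
    exact ⟨e, mem_filter.2 ⟨he, (div_eq_iff_mem_Ico hk).2 hx⟩, rfl⟩
  have himage : {e ∈ s | r e / k = j}.image c = univ :=
    eq_univ_of_card _ (le_antisymm (card_le_univ _)
      (by rw [card_image_of_injOn hc, Fintype.card_fin]; exact hblock))
  obtain ⟨e, he, rfl⟩ := mem_image.1 (himage ▸ mem_univ i)
  exact ⟨e, (mem_filter.1 he).1, (mem_filter.1 he).2, rfl⟩

lemma card_filter_eq_mem_Icc {s : Finset E} {r : E → ℕ} (hr : s.image r = range #s) {k : ℕ}
    {c : E → Fin k} (hc : Set.InjOn (fun e => (r e / k, c e)) s) (i : Fin k) :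
    #{e ∈ s | c e = i} ∈ Set.Icc (#s / k) ((#s + k - 1) / k) := by
  have hblock : Set.InjOn (fun e => r e / k) (s.filter fun e => c e = i) := fun e he e' he' h =>
    hc (mem_filter.1 he).1 (mem_filter.1 he').1
      (Prod.ext h ((mem_filter.1 he).2.trans (mem_filter.1 he').2.symm))
  rw [← card_image_of_injOn hblock]
  constructor
  · calc #s / k = #(range (#s / k)) := (card_range _).symm
      _ ≤ _ := card_le_card fun j hj => ?_
    obtain ⟨e, he, hej, hei⟩ := exists_mem_filter_div_eq_of_lt hr (mem_range.1 hj)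
      (c := c) (fun e he e' he' h => hc (mem_filter.1 he).1 (mem_filter.1 he').1
        (Prod.ext ((mem_filter.1 he).2.trans (mem_filter.1 he').2.symm) h)) i
    exact mem_image.2 ⟨e, mem_filter.2 ⟨he, hei⟩, hej⟩
  · calc _ ≤ #(range ((#s + k - 1) / k)) := card_le_card fun j hj => ?_
      _ = _ := card_range _
    obtain ⟨e, he, rfl⟩ := mem_image.1 hj
    have hrs : r e < #s := mem_range.1 (hr ▸ mem_image_of_mem r (mem_filter.1 he).1)
    have := Nat.div_mul_le_self (r e) k
    rw [mem_range, Nat.lt_iff_add_one_le, Nat.le_div_iff_mul_le i.pos, add_one_mul]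
    omega

section Bipartite

variable [DecidableEq V]

lemma card_filter_mem_eq_card_mul {p : E → V} {S : Finset E} {d : ℕ}
    (h : ∀ v, #{e ∈ S | p e = v} = d) (T : Finset V) : #{e ∈ S | p e ∈ T} = #T * d := by
  rw [← sum_card_fiberwise_eq_card_filter, sum_const_nat fun v _ => h v]

lemma card_filter_image_eq_one [Fintype V] [DecidableEq E] {m : V → E} {p : E → V}
    (hm : (p ∘ m).Bijective) (v : V) : #{e ∈ univ.image m | p e = v} = 1 := by
  obtain ⟨u, hu⟩ := hm.2 v
  refine card_eq_one.2 ⟨m u, ?_⟩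
  ext e
  simp only [mem_filter, mem_image, mem_univ, true_and, mem_singleton]
  constructor
  · rintro ⟨⟨x, rfl⟩, hx⟩
    rw [hm.1 (hx.trans hu.symm)]
  · rintro rfl
    exact ⟨⟨u, rfl⟩, hu⟩

theorem exists_perfect_matching_of_regular [Fintype V] {a b : E → V} {S : Finset E} {d : ℕ}
    (hd : 0 < d) (ha : ∀ v, #{e ∈ S | a e = v} = d) (hb : ∀ v, #{e ∈ S | b e = v} = d) :
    ∃ M ⊆ S, (∀ v, #{e ∈ M | a e = v} = 1) ∧ ∀ v, #{e ∈ M | b e = v} = 1 := by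
  classical
  set t : V → Finset V := fun v => {e ∈ S | a e = v}.image b
  have hall : ∀ T : Finset V, #T ≤ #(T.biUnion t) := by
    intro T
    have hsub : {e ∈ S | a e ∈ T} ⊆ {e ∈ S | b e ∈ T.biUnion t} := by
      intro e he
      simp only [mem_filter, mem_biUnion, t, mem_image] at he ⊢
      exact ⟨he.1, a e, he.2, e, ⟨he.1, rfl⟩, rfl⟩
    have := card_le_card hsub
    rw [card_filter_mem_eq_card_mul ha, card_filter_mem_eq_card_mul hb] at this
    exact Nat.le_of_mul_le_mul_right this hd
  obtain ⟨f, hf, hft⟩ := (all_card_le_biUnion_card_iff_exists_injective t).1 hall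
  have hedge : ∀ v, ∃ e ∈ S, a e = v ∧ b e = f v := by
    intro v
    obtain ⟨e, he, hbe⟩ := mem_image.1 (hft v)
    exact ⟨e, (mem_filter.1 he).1, (mem_filter.1 he).2, hbe⟩
  choose m hmS ham hbm using hedge
  refine ⟨univ.image m, ?_, card_filter_image_eq_one ?_, card_filter_image_eq_one ?_⟩
  · simpa [subset_iff] using hmS
  · rw [show a ∘ m = id from funext ham]
    exact Function.bijective_id
  · rw [show b ∘ m = f from funext hbm]
    exact ⟨hf, Finite.surjective_of_injective hf⟩

lemma injOn_ite_of_card_filter_eq_one [DecidableEq E] {p : E → V} {S M : Finset E}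
    {c : E → ℕ} {k : ℕ} (hM : ∀ v, #{e ∈ M | p e = v} = 1)
    (hck : ∀ e ∈ S \ M, c e < k)
    (hc : Set.InjOn (fun e => (p e, c e)) ↑(S \ M)) :
    Set.InjOn (fun e => (p e, if e ∈ M then k else c e)) S := by
  intro e he e' he' h
  simp only [Prod.mk.injEq] at h
  obtain ⟨hp, hce⟩ := h
  by_cases hM₁ : e ∈ M <;> by_cases hM₂ : e' ∈ M <;>
    simp only [hM₁, hM₂, if_true, if_false] at hce
  · exact card_le_one.1 (hM (p e)).le e (mem_filter.2 ⟨hM₁, rfl⟩) e'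
      (mem_filter.2 ⟨hM₂, hp.symm⟩)
  · exact absurd hce (hck e' (mem_sdiff.2 ⟨he', hM₂⟩)).ne'
  · exact absurd hce (hck e (mem_sdiff.2 ⟨he, hM₁⟩)).ne
  · exact hc (mem_sdiff.2 ⟨he, hM₁⟩) (mem_sdiff.2 ⟨he', hM₂⟩) (Prod.ext hp hce)

/-- Colours are natural numbers `< k` rather than elements of `Fin k`: for `k = 0` and `S = ∅`
there is no map `E → Fin 0` unless `E` is empty. -/
theorem exists_proper_coloring_of_regular [Fintype V] (a b : E → V) (k : ℕ) (S : Finset E)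
    (ha : ∀ v, #{e ∈ S | a e = v} = k) (hb : ∀ v, #{e ∈ S | b e = v} = k) :
    ∃ c : E → ℕ, (∀ e ∈ S, c e < k) ∧ Set.InjOn (fun e => (a e, c e)) S ∧
      Set.InjOn (fun e => (b e, c e)) S := by
  classical
  induction k generalizing S with
  | zero =>
    have hS : S = ∅ := eq_empty_of_forall_notMem fun e he =>
      filter_eq_empty_iff.1 (card_eq_zero.1 (ha (a e))) he rfl
    subst hS
    simp
  | succ k ih =>
    obtain ⟨M, hMS, hMa, hMb⟩ := exists_perfect_matching_of_regular k.succ_pos ha hb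
    have hrest : ∀ p : E → V, ∀ v, #{e ∈ S \ M | p e = v} =
        #{e ∈ S | p e = v} - #{e ∈ M | p e = v} := fun p v => by
      rw [← card_sdiff_of_subset (filter_subset_filter _ hMS)]
      congr 1
      ext e
      simp only [mem_filter, mem_sdiff]
      tauto
    obtain ⟨c, hck, hca, hcb⟩ := ih (S \ M)
      (fun v => by rw [hrest, ha, hMa]; rfl) (fun v => by rw [hrest, hb, hMb]; rfl)
    refine ⟨fun e => if e ∈ M then k else c e, fun e he => ?_,
      injOn_ite_of_card_filter_eq_one hMa hck hca, injOn_ite_of_card_filter_eq_one hMb hck hcb⟩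
    dsimp only
    split_ifs with hM
    · exact k.lt_succ_self
    · exact (hck e (mem_sdiff.2 ⟨he, hM⟩)).trans k.lt_succ_self

lemma card_filter_sum_elim [Fintype E] {F : Type*} [Fintype F] (f : E → V) (g : F → V)
    (v : V) : #{x | Sum.elim f g x = v} = #{e | f e = v} + #{y | g y = v} := by
  simp only [card_filter, Fintype.sum_sum_type, Sum.elim_inl, Sum.elim_inr]
  rfl

lemma card_filter_sigma_fst [Fintype V] (d : V → ℕ) (v : V) :
    #{x : Σ w, Fin (d w) | x.1 = v} = d v := by
  simp only [card_filter, Fintype.sum_sigma]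
  simp [apply_ite card]

lemma sum_tsub_card_filter [Fintype V] [Fintype E] {p : E → V} {k : ℕ}
    (hp : ∀ v, #{e | p e = v} ≤ k) :
    ∑ v, (k - #{e | p e = v}) = k * Fintype.card V - Fintype.card E := by
  rw [sum_tsub_distrib _ fun v _ => hp v, sum_card_fiberwise_eq_card_filter]
  simp [mul_comm]

theorem exists_proper_coloring_of_card_fiber_le [Fintype V] [Fintype E] {a b : E → V} {k : ℕ}
    (ha : ∀ v, #{e | a e = v} ≤ k) (hb : ∀ v, #{e | b e = v} ≤ k) :
    ∃ c : E → Fin k, (fun e => (a e, c e)).Injective ∧ (fun e => (b e, c e)).Injective := by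
  -- Both sides need `k * |V| - |E|` padding edges, so the two paddings can be identified.
  obtain ⟨φ⟩ :
      Nonempty ((Σ v, Fin (k - #{e | a e = v})) ≃ Σ v, Fin (k - #{e | b e = v})) :=
    Fintype.card_eq.1 (by simp only [Fintype.card_sigma, Fintype.card_fin,
      sum_tsub_card_filter ha, sum_tsub_card_filter hb])
  obtain ⟨c, hck, hca, hcb⟩ := exists_proper_coloring_of_regular
    (Sum.elim a Sigma.fst) (Sum.elim b fun x => (φ x).1) k univ
    (fun v => by
      rw [card_filter_sum_elim, card_filter_sigma_fst]
      exact Nat.add_sub_cancel' (ha v))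
    (fun v => by
      rw [card_filter_sum_elim, card_filter_comp_equiv φ (·.1 = v), card_filter_sigma_fst]
      exact Nat.add_sub_cancel' (hb v))
  refine ⟨fun e => ⟨c (.inl e), hck _ (mem_univ _)⟩, fun e e' h => ?_, fun e e' h => ?_⟩
  · exact Sum.inl_injective (hca (mem_univ _) (mem_univ _) (by simpa [Fin.ext_iff] using h))
  · exact Sum.inl_injective (hcb (mem_univ _) (mem_univ _) (by simpa [Fin.ext_iff] using h))

lemma exists_fiberwise_numbering [Fintype E] (p : E → V) :
    ∃ r : E → ℕ, ∀ v, image r {e | p e = v} = range #{e | p e = v} := by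
  choose r hr using fun v => exists_image_eq_range {e | p e = v}
  refine ⟨fun e => r (p e) e, fun v => ?_⟩
  rw [← hr v]
  exact image_congr fun e he => congrArg (r · e) (mem_filter.1 (mem_coe.1 he)).2

theorem exists_split_proper_imp_equitable [Fintype E] (p : E → V) {k : ℕ} (hk : 0 < k) :
    ∃ q : E → V × Fin (Fintype.card E), (∀ w, #{e | q e = w} ≤ k) ∧
      ∀ c : E → Fin k, (fun e => (q e, c e)).Injective → ∀ v i,
        |(#{e ∈ {e | c e = i} | p e = v} : ℝ) - #{e | p e = v} / k| < 1 := by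
  obtain ⟨r, hr⟩ := exists_fiberwise_numbering p
  have hlt : ∀ e, r e / k < Fintype.card E := fun e =>
    calc r e / k ≤ r e := Nat.div_le_self _ _
      _ < #{e' | p e' = p e} :=
        mem_range.1 (hr (p e) ▸ mem_image_of_mem r (mem_filter.2 ⟨mem_univ e, rfl⟩))
      _ ≤ Fintype.card E := card_le_univ _
  refine ⟨fun e => (p e, ⟨r e / k, hlt e⟩), fun ⟨v, j⟩ => ?_, fun c hc v i => ?_⟩
  · convert card_filter_div_eq_le (hr v) hk j using 2
    ext e
    simp [Prod.ext_iff, Fin.ext_iff]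
  · rw [filter_comm]
    refine abs_sub_div_lt_one_of_mem_Icc hk (card_filter_eq_mem_Icc (hr v) ?_ i)
    intro e he e' he' h
    simp only [mem_coe, mem_filter, mem_univ, true_and, Prod.mk.injEq] at he he' h
    exact hc (Prod.ext (Prod.ext (he.trans he'.symm) (Fin.ext h.1)) h.2)

theorem exists_equitable_coloring [Fintype V] [Fintype E] (a b : E → V) {k : ℕ} (hk : 0 < k) :
    ∃ c : E → Fin k, ∀ v i,
      |(#{e ∈ {e | c e = i} | a e = v} : ℝ) - #{e | a e = v} / k| < 1 ∧
      |(#{e ∈ {e | c e = i} | b e = v} : ℝ) - #{e | b e = v} / k| < 1 := by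
  obtain ⟨qa, hqa, ha⟩ := exists_split_proper_imp_equitable a hk
  obtain ⟨qb, hqb, hb⟩ := exists_split_proper_imp_equitable b hk
  obtain ⟨c, hca, hcb⟩ := exists_proper_coloring_of_card_fiber_le hqa hqb
  exact ⟨c, fun v i => ⟨ha c hca v i, hb c hcb v i⟩⟩

lemma mdeg_congr_swap {ends ends' : E → V × V}
    (h : ∀ e, ends' e = ends e ∨ ends' e = (ends e).swap) (S : Finset E) (v : V) :
    mdeg ends' S v = mdeg ends S v := by
  simp only [mdeg, card_filter, ← sum_add_distrib]
  refine sum_congr rfl fun e _ => ?_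
  rcases h e with h | h <;> simp only [h, Prod.fst_swap, Prod.snd_swap, add_comm]

lemma mdeg_eq_card_filter_fst {ends : E → V × V} {v : V} (h : ∀ e, (ends e).2 ≠ v)
    (S : Finset E) : mdeg ends S v = #{e ∈ S | (ends e).1 = v} := by
  simp [mdeg, h]

lemma mdeg_eq_card_filter_snd {ends : E → V × V} {v : V} (h : ∀ e, (ends e).1 ≠ v)
    (S : Finset E) : mdeg ends S v = #{e ∈ S | (ends e).2 = v} := by
  simp [mdeg, h]

end Bipartite

/-- de Werra's theorem: every bipartite multigraph has an equitable edge-decomposition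
into `k` factors. -/
theorem deWerra_equitable_factorization [Fintype V] [Fintype E] [DecidableEq V]
    (ends : E → V × V)
    (hbip : ∃ A : Finset V, ∀ e : E,
      ((ends e).1 ∈ A ∧ (ends e).2 ∉ A) ∨ ((ends e).1 ∉ A ∧ (ends e).2 ∈ A))
    (k : ℕ) (hk : 0 < k) :
    ∃ c : E → Fin k, ∀ v : V, ∀ i : Fin k,
      |((mdeg ends (univ.filter fun e => c e = i) v : ℝ)) -
        (mdeg ends univ v : ℝ) / (k : ℝ)| < 1 := by
  obtain ⟨A, hA⟩ := hbip
  set ends' : E → V × V := fun e => if (ends e).1 ∈ A then ends e else (ends e).swap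
  have hswap : ∀ e, ends' e = ends e ∨ ends' e = (ends e).swap := fun e => by
    by_cases h : (ends e).1 ∈ A <;> simp [ends', h]
  have hside : ∀ e, (ends' e).1 ∈ A ∧ (ends' e).2 ∉ A := fun e => by
    rcases hA e with h | h <;> simp [ends', h]
  obtain ⟨c, hc⟩ := exists_equitable_coloring (fun e => (ends' e).1) (fun e => (ends' e).2) hk
  refine ⟨c, fun v i => ?_⟩
  rw [← mdeg_congr_swap hswap, ← mdeg_congr_swap hswap]
  by_cases hv : v ∈ A
  · have h : ∀ e, (ends' e).2 ≠ v := fun e he => (hside e).2 (he ▸ hv)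
    rw [mdeg_eq_card_filter_fst h, mdeg_eq_card_filter_fst h]
    exact (hc v i).1
  · have h : ∀ e, (ends' e).1 ≠ v := fun e he => hv (he ▸ (hside e).1)
    rw [mdeg_eq_card_filter_snd h, mdeg_eq_card_filter_snd h]
    exact (hc v i).2
end

section
/- Every loopless bipartite multigraph with maximum degree at most k admits a proper edge-coloring with at most k colors. -/
open Finset

variable {V E : Type*}

section KonigAux

variable [DecidableEq V]

/-- `x` is an endpoint of edge `e`. -/
def incid (ends : E → V × V) (x : V) (e : E) : Prop :=
  (ends e).1 = x ∨ (ends e).2 = x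

/-- The endpoint of `e` other than `x`. -/
def otherEnd (ends : E → V × V) (e : E) (x : V) : V :=
  if (ends e).1 = x then (ends e).2 else (ends e).1

/-- Proper coloring on a finite set `S` of edges. -/
def ProperOn (ends : E → V × V) (S : Finset E) {k : ℕ} (c : E → Fin k) : Prop :=
  ∀ e ∈ S, ∀ f ∈ S, e ≠ f →
    ((ends e).1 = (ends f).1 ∨ (ends e).1 = (ends f).2 ∨
     (ends e).2 = (ends f).1 ∨ (ends e).2 = (ends f).2) → c e ≠ c f

variable {ends : E → V × V}

lemma otherEnd_incid (e : E) (x : V) : incid ends (otherEnd ends e x) e := by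
  unfold otherEnd incid
  split <;> simp

lemma eq_or_eq_otherEnd {e : E} {x y : V} (hx : incid ends x e) (hy : incid ends y e) :
    y = x ∨ y = otherEnd ends e x := by
  by_cases h1 : (ends e).1 = x
  · simp only [otherEnd, if_pos h1]
    rcases hy with hy | hy
    · exact Or.inl (hy.symm.trans h1)
    · exact Or.inr hy.symm
  · simp only [otherEnd, if_neg h1]
    rcases hy with hy | hy
    · exact Or.inr hy.symm
    · rcases hx with hx | hx
      · exact absurd hx h1
      · exact Or.inl (hy.symm.trans hx)

lemma otherEnd_otherEnd {e : E} {x : V} (hloop : (ends e).1 ≠ (ends e).2)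
    (hx : incid ends x e) : otherEnd ends e (otherEnd ends e x) = x := by
  by_cases h1 : (ends e).1 = x
  · simp only [otherEnd, if_pos h1]
    rw [if_neg hloop]
    exact h1
  · have h2 : (ends e).2 = x := hx.resolve_left h1
    simp only [otherEnd, if_neg h1, if_true]
    exact h2

lemma side_otherEnd {A : Finset V}
    (hA : ∀ e : E, ((ends e).1 ∈ A ∧ (ends e).2 ∉ A) ∨ ((ends e).1 ∉ A ∧ (ends e).2 ∈ A))
    {e : E} {x : V} (hx : incid ends x e) :
    (x ∈ A ↔ otherEnd ends e x ∉ A) := by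
  by_cases h1 : (ends e).1 = x
  · simp only [otherEnd, if_pos h1]
    rcases hA e with ⟨h2, h3⟩ | ⟨h2, h3⟩ <;> rw [← h1] <;> tauto
  · have h2 : (ends e).2 = x := hx.resolve_left h1
    simp only [otherEnd, if_neg h1]
    rcases hA e with ⟨h3, h4⟩ | ⟨h3, h4⟩ <;> rw [← h2] <;> tauto

lemma adj_of_incid {e f : E} {x : V} (hxe : incid ends x e) (hxf : incid ends x f) :
    (ends e).1 = (ends f).1 ∨ (ends e).1 = (ends f).2 ∨
     (ends e).2 = (ends f).1 ∨ (ends e).2 = (ends f).2 := by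
  rcases hxe with h | h <;> rcases hxf with h' | h' <;> rw [h, h'] <;> tauto

lemma shared_of_adj {e f : E}
    (h : (ends e).1 = (ends f).1 ∨ (ends e).1 = (ends f).2 ∨
     (ends e).2 = (ends f).1 ∨ (ends e).2 = (ends f).2) :
    ∃ x, incid ends x e ∧ incid ends x f := by
  rcases h with h | h | h | h
  · exact ⟨(ends f).1, Or.inl h, Or.inl rfl⟩
  · exact ⟨(ends f).2, Or.inl h, Or.inr rfl⟩
  · exact ⟨(ends f).1, Or.inr h, Or.inl rfl⟩
  · exact ⟨(ends f).2, Or.inr h, Or.inr rfl⟩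

/-- The `α`/`β` Kempe chain starting at `v` (which has an `α`-edge but no `β`-edge).
`Chain ends S c α β v e w` means `e` is an edge of the chain and `w` is its far endpoint. -/
inductive Chain (ends : E → V × V) {k : ℕ} (S : Finset E) (c : E → Fin k)
    (α β : Fin k) (v : V) : E → V → Prop
  | base (e : E) (he : e ∈ S) (hc : c e = α) (hv : incid ends v e) :
      Chain ends S c α β v e (otherEnd ends e v)
  | step (e : E) (w : V) (h : Chain ends S c α β v e w) (f : E) (hf : f ∈ S) (hne : f ≠ e)
      (hw : incid ends w f) (hcf : c f = α ∨ c f = β) :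
      Chain ends S c α β v f (otherEnd ends f w)

variable {k : ℕ} {S : Finset E} {c : E → Fin k} {α β : Fin k} {u v : V} {A : Finset V}

lemma chain_mem {e : E} {w : V} (h : Chain ends S c α β v e w) :
    e ∈ S ∧ incid ends w e ∧ (c e = α ∨ c e = β) := by
  induction h with
  | base e he hc hv => exact ⟨he, otherEnd_incid e v, Or.inl hc⟩
  | step e w h f hf hne hw hcf ih => exact ⟨hf, otherEnd_incid f w, hcf⟩

lemma chain_parity (hloop : ∀ e : E, (ends e).1 ≠ (ends e).2)
    (hA : ∀ e : E, ((ends e).1 ∈ A ∧ (ends e).2 ∉ A) ∨ ((ends e).1 ∉ A ∧ (ends e).2 ∈ A))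
    (hprop : ProperOn ends S c) (hαβ : α ≠ β)
    {e : E} {w : V} (h : Chain ends S c α β v e w) :
    ((c e = α) ↔ ((w ∈ A) ↔ (v ∉ A))) ∧
    (c e = β → ∃ g ∈ S, incid ends (otherEnd ends e w) g ∧ c g = α) := by
  induction h with
  | base e he hc hv =>
    have hs := side_otherEnd hA hv
    refine ⟨by tauto, fun hb => absurd (hc.symm.trans hb) hαβ⟩
  | step e w h f hf hne hw hcf ih =>
    obtain ⟨he, hwe, hce⟩ := chain_mem h
    have hfe : c f ≠ c e := hprop f hf e he hne (adj_of_incid hw hwe)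
    have key : c f = α ↔ c e = β := by
      constructor
      · intro h1
        rcases hce with h2 | h2
        · exact absurd (h1.trans h2.symm) hfe
        · exact h2
      · intro h1
        rcases hcf with h2 | h2
        · exact h2
        · exact absurd (h2.trans h1.symm) hfe
    have hne2 : c e = β ↔ ¬ c e = α := by
      constructor
      · intro h1 h2
        exact hαβ (h2.symm.trans h1)
      · intro h1
        exact hce.resolve_left h1
    have hs := side_otherEnd hA hw
    constructor
    · rw [key, hne2, ih.1]
      tauto
    · intro h1
      have hceα : c e = α := by
        rcases hce with h2 | h2
        · exact h2
        · exact absurd (h1.trans h2.symm) hfe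
      refine ⟨e, he, ?_, hceα⟩
      rw [otherEnd_otherEnd (hloop f) hw]
      exact hwe

lemma chain_closure (hprop : ProperOn ends S c)
    (hβv : ∀ f ∈ S, incid ends v f → c f ≠ β)
    {e : E} {w : V} (h : Chain ends S c α β v e w) :
    ∀ f ∈ S, f ≠ e → (c f = α ∨ c f = β) → ∀ x, incid ends x e → incid ends x f →
      ∃ w', Chain ends S c α β v f w' := by
  induction h with
  | base e he hc hv =>
    intro f hf hne hcf x hxe hxf
    rcases eq_or_eq_otherEnd hv hxe with hx1 | hx1
    · rw [hx1] at hxf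
      exfalso
      rcases hcf with h1 | h1
      · exact hprop f hf e he hne (adj_of_incid hxf hv) (h1.trans hc.symm)
      · exact hβv f hf hxf h1
    · rw [hx1] at hxf
      exact ⟨_, Chain.step e _ (Chain.base e he hc hv) f hf hne hxf hcf⟩
  | step e w h f' hf' hne' hw' hcf' ih =>
    intro f hf hne hcf x hxe hxf
    rcases eq_or_eq_otherEnd hw' hxe with hx1 | hx1
    · rw [hx1] at hxf
      by_cases hfe : f = e
      · exact ⟨w, by rw [hfe]; exact h⟩
      · exact ih f hf hfe hcf w (chain_mem h).2.1 hxf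
    · rw [hx1] at hxf
      exact ⟨_, Chain.step f' _ (Chain.step e w h f' hf' hne' hw' hcf') f hf hne hxf hcf⟩

lemma chain_avoid (hloop : ∀ e : E, (ends e).1 ≠ (ends e).2)
    (hA : ∀ e : E, ((ends e).1 ∈ A ∧ (ends e).2 ∉ A) ∨ ((ends e).1 ∉ A ∧ (ends e).2 ∈ A))
    (hprop : ProperOn ends S c) (hαβ : α ≠ β)
    (hαu : ∀ f ∈ S, incid ends u f → c f ≠ α)
    (huv : (u ∈ A) ↔ (v ∉ A))
    {e : E} {w : V} (h : Chain ends S c α β v e w) : ¬ incid ends u e := by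
  intro hu
  obtain ⟨he, hwe, hce⟩ := chain_mem h
  obtain ⟨h1, h2⟩ := chain_parity hloop hA hprop hαβ h
  have hs := side_otherEnd hA hwe
  rcases eq_or_eq_otherEnd hwe hu with hu1 | hu2
  · by_cases hca : c e = α
    · exact hαu e he hu hca
    · rw [hu1] at huv
      exact hca (h1.mpr huv)
  · rcases hce with hca | hcb
    · have hw1 : (w ∈ A) ↔ (v ∉ A) := h1.mp hca
      rw [hu2] at huv
      tauto
    · obtain ⟨g, hg, hgi, hgα⟩ := h2 hcb
      rw [← hu2] at hgi
      exact hαu g hg hgi hgα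

lemma exists_missing (S : Finset E) (c : E → Fin k) (x : V)
    (h : mdeg ends S x < k) : ∃ γ : Fin k, ∀ f ∈ S, incid ends x f → c f ≠ γ := by
  classical
  have h1 : (S.filter fun f => (ends f).1 = x ∨ (ends f).2 = x).card ≤ mdeg ends S x := by
    rw [filter_or]
    exact card_union_le _ _
  have h2 : (((S.filter fun f => (ends f).1 = x ∨ (ends f).2 = x)).image c).card
      < (univ : Finset (Fin k)).card := by
    rw [card_univ, Fintype.card_fin]
    exact lt_of_le_of_lt (le_trans card_image_le h1) h
  obtain ⟨γ, hγ⟩ : ∃ γ : Fin k,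
      γ ∉ ((S.filter fun f => (ends f).1 = x ∨ (ends f).2 = x)).image c := by
    by_contra hcon
    push_neg at hcon
    exact absurd (card_le_card fun γ _ => hcon γ) (not_le.2 h2)
  refine ⟨γ, fun f hf hif hcf => hγ ?_⟩
  exact mem_image.2 ⟨f, mem_filter.2 ⟨hf, hif⟩, hcf⟩

lemma mdeg_mono {S T : Finset E} (h : S ⊆ T) (x : V) : mdeg ends S x ≤ mdeg ends T x := by
  unfold mdeg
  exact Nat.add_le_add (card_le_card (filter_subset_filter _ h))
    (card_le_card (filter_subset_filter _ h))

lemma mdeg_erase [DecidableEq E] {S : Finset E} {e0 : E} (he : e0 ∈ S) {x : V}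
    (hx : incid ends x e0) : mdeg ends (S.erase e0) x < mdeg ends S x := by
  unfold mdeg
  have hsub1 : ((S.erase e0).filter fun e => (ends e).1 = x) ⊆
      (S.filter fun e => (ends e).1 = x) := filter_subset_filter _ (erase_subset _ _)
  have hsub2 : ((S.erase e0).filter fun e => (ends e).2 = x) ⊆
      (S.filter fun e => (ends e).2 = x) := filter_subset_filter _ (erase_subset _ _)
  rcases hx with hx | hx
  · have h1 : ((S.erase e0).filter fun e => (ends e).1 = x)
        = ((S.filter fun e => (ends e).1 = x).erase e0) := filter_erase _ _ _
    have h2 : ((S.erase e0).filter fun e => (ends e).1 = x).card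
        < (S.filter fun e => (ends e).1 = x).card := by
      rw [h1]
      exact card_erase_lt_of_mem (mem_filter.2 ⟨he, hx⟩)
    exact Nat.add_lt_add_of_lt_of_le h2 (card_le_card hsub2)
  · have h1 : ((S.erase e0).filter fun e => (ends e).2 = x)
        = ((S.filter fun e => (ends e).2 = x).erase e0) := filter_erase _ _ _
    have h2 : ((S.erase e0).filter fun e => (ends e).2 = x).card
        < (S.filter fun e => (ends e).2 = x).card := by
      rw [h1]
      exact card_erase_lt_of_mem (mem_filter.2 ⟨he, hx⟩)
    exact Nat.add_lt_add_of_le_of_lt (card_le_card hsub1) h2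

lemma konig_aux [Fintype E] [DecidableEq E] (ends : E → V × V)
    (hloop : ∀ e : E, (ends e).1 ≠ (ends e).2)
    (A : Finset V)
    (hA : ∀ e : E, ((ends e).1 ∈ A ∧ (ends e).2 ∉ A) ∨ ((ends e).1 ∉ A ∧ (ends e).2 ∈ A))
    (k : ℕ) (hk : 0 < k) (hdeg : ∀ v : V, mdeg ends univ v ≤ k) :
    ∀ S : Finset E, ∃ c : E → Fin k, ProperOn ends S c := by
  intro S
  induction S using Finset.strongInduction with
  | _ S ih =>
  classical
  rcases S.eq_empty_or_nonempty with rfl | ⟨e0, he0⟩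
  · exact ⟨fun _ => ⟨0, hk⟩, by intro e he; simp at he⟩
  · set u := (ends e0).1 with hu_def
    set v := (ends e0).2 with hv_def
    set S' := S.erase e0 with hS'
    obtain ⟨c, hc⟩ := ih S' (erase_ssubset he0)
    have hdu : mdeg ends S' u < k :=
      lt_of_lt_of_le (mdeg_erase he0 (Or.inl rfl))
        (le_trans (mdeg_mono (subset_univ S) u) (hdeg u))
    have hdv : mdeg ends S' v < k :=
      lt_of_lt_of_le (mdeg_erase he0 (Or.inr rfl))
        (le_trans (mdeg_mono (subset_univ S) v) (hdeg v))
    obtain ⟨α, hα⟩ := exists_missing S' c u hdu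
    obtain ⟨β, hβ⟩ := exists_missing S' c v hdv
    -- extension lemma
    have extend : ∀ (c' : E → Fin k), ProperOn ends S' c' →
        (∀ f ∈ S', incid ends u f → c' f ≠ α) →
        (∀ f ∈ S', incid ends v f → c' f ≠ α) →
        ∃ c'' : E → Fin k, ProperOn ends S c'' := by
      intro c' hp hu' hv'
      refine ⟨Function.update c' e0 α, ?_⟩
      intro e he f hf hne hadj
      by_cases he0e : e = e0
      · have hf0 : f ≠ e0 := fun h => hne (he0e.trans h.symm)
        rw [he0e, Function.update_self, Function.update_of_ne hf0]
        have hfS' : f ∈ S' := mem_erase.2 ⟨hf0, hf⟩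
        rw [he0e] at hadj
        rcases hadj with h | h | h | h
        · exact (hu' f hfS' (Or.inl h.symm)).symm
        · exact (hu' f hfS' (Or.inr h.symm)).symm
        · exact (hv' f hfS' (Or.inl h.symm)).symm
        · exact (hv' f hfS' (Or.inr h.symm)).symm
      · by_cases hf0 : f = e0
        · rw [hf0, Function.update_self, Function.update_of_ne he0e]
          have heS' : e ∈ S' := mem_erase.2 ⟨he0e, he⟩
          rw [hf0] at hadj
          rcases hadj with h | h | h | h
          · exact hu' e heS' (Or.inl h)
          · exact hv' e heS' (Or.inl h)
          · exact hu' e heS' (Or.inr h)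
          · exact hv' e heS' (Or.inr h)
        · rw [Function.update_of_ne he0e, Function.update_of_ne hf0]
          exact hp e (mem_erase.2 ⟨he0e, he⟩) f (mem_erase.2 ⟨hf0, hf⟩) hne hadj
    by_cases hvα : ∀ f ∈ S', incid ends v f → c f ≠ α
    · exact extend c hc hα hvα
    · push_neg at hvα
      obtain ⟨f0, hf0, hf0i, hf0α⟩ := hvα
      have hαβ : α ≠ β := by
        rintro rfl
        exact hβ f0 hf0 hf0i hf0α
      have huv : (u ∈ A) ↔ (v ∉ A) := by
        rcases hA e0 with ⟨h1, h2⟩ | ⟨h1, h2⟩ <;>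
          simp only [← hu_def, ← hv_def] at h1 h2 <;> tauto
      set c2 : E → Fin k := fun e =>
        if (∃ w, Chain ends S' c α β v e w) then (if c e = α then β else α) else c e
        with hc2
      have hc2_chain : ∀ e, (∃ w, Chain ends S' c α β v e w) →
          c2 e = (if c e = α then β else α) := by
        intro e hch
        simp only [hc2, if_pos hch]
      have hc2_not : ∀ e, ¬ (∃ w, Chain ends S' c α β v e w) → c2 e = c e := by
        intro e hch
        simp only [hc2, if_neg hch]
      have hprop2 : ProperOn ends S' c2 := by
        intro e he f hf hne hadj
        obtain ⟨x, hxe, hxf⟩ := shared_of_adj hadj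
        by_cases hce : ∃ w, Chain ends S' c α β v e w
        · by_cases hcf : ∃ w, Chain ends S' c α β v f w
          · rw [hc2_chain e hce, hc2_chain f hcf]
            have hcole := (chain_mem hce.choose_spec).2.2
            have hcolf := (chain_mem hcf.choose_spec).2.2
            have hcef : c e ≠ c f := hc e he f hf hne hadj
            rcases hcole with h1 | h1 <;> rcases hcolf with h2 | h2
            · exact absurd (h1.trans h2.symm) hcef
            · rw [if_pos h1, if_neg (by rw [h2]; exact fun hh => hαβ hh.symm)]
              exact fun hh => hαβ hh.symm
            · rw [if_neg (by rw [h1]; exact fun hh => hαβ hh.symm), if_pos h2]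
              exact hαβ
            · exact absurd (h1.trans h2.symm) hcef
          · have hcolf : ¬ (c f = α ∨ c f = β) := by
              intro hcol
              exact hcf (chain_closure hc hβ hce.choose_spec f hf
                (fun hh => hne hh.symm) hcol x hxe hxf)
            push_neg at hcolf
            rw [hc2_chain e hce, hc2_not f hcf]
            by_cases h1 : c e = α
            · rw [if_pos h1]
              exact fun hh => hcolf.2 hh.symm
            · rw [if_neg h1]
              exact fun hh => hcolf.1 hh.symm
        · by_cases hcf : ∃ w, Chain ends S' c α β v f w
          · have hcole : ¬ (c e = α ∨ c e = β) := by
              intro hcol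
              exact hce (chain_closure hc hβ hcf.choose_spec e he hne hcol x hxf hxe)
            push_neg at hcole
            rw [hc2_not e hce, hc2_chain f hcf]
            by_cases h1 : c f = α
            · rw [if_pos h1]
              exact hcole.2
            · rw [if_neg h1]
              exact hcole.1
          · rw [hc2_not e hce, hc2_not f hcf]
            exact hc e he f hf hne hadj
      have hu2 : ∀ f ∈ S', incid ends u f → c2 f ≠ α := by
        intro f hf hfi
        have hnc : ¬ (∃ w, Chain ends S' c α β v f w) := by
          rintro ⟨w, hw⟩
          exact chain_avoid hloop hA hc hαβ hα huv hw hfi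
        rw [hc2_not f hnc]
        exact hα f hf hfi
      have hv2 : ∀ f ∈ S', incid ends v f → c2 f ≠ α := by
        intro f hf hfi
        by_cases hch : ∃ w, Chain ends S' c α β v f w
        · have hcol := (chain_mem hch.choose_spec).2.2
          have hfα : c f = α := hcol.resolve_right (hβ f hf hfi)
          rw [hc2_chain f hch, if_pos hfα]
          exact fun hh => hαβ hh.symm
        · rw [hc2_not f hch]
          intro hfα
          exact hch ⟨_, Chain.base f hf hfα hfi⟩
      exact extend c2 hprop2 hu2 hv2

end KonigAux

/-- König's edge-coloring theorem: a loopless bipartite multigraph with maximum degree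
at most `k` has a proper edge-coloring with at most `k` colors. -/
theorem konig_edge_coloring [Fintype V] [Fintype E] [DecidableEq V]
    (ends : E → V × V)
    (hloopless : ∀ e : E, (ends e).1 ≠ (ends e).2)
    (hbip : ∃ A : Finset V, ∀ e : E,
      ((ends e).1 ∈ A ∧ (ends e).2 ∉ A) ∨ ((ends e).1 ∉ A ∧ (ends e).2 ∈ A))
    (k : ℕ) (hdeg : ∀ v : V, mdeg ends univ v ≤ k) :
    ∃ c : E → Fin k, ∀ e f : E, e ≠ f →
      ((ends e).1 = (ends f).1 ∨ (ends e).1 = (ends f).2 ∨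
       (ends e).2 = (ends f).1 ∨ (ends e).2 = (ends f).2) →
      c e ≠ c f := by
  classical
  obtain ⟨A, hA⟩ := hbip
  cases isEmpty_or_nonempty E with
  | inl h =>
    exact ⟨fun e => isEmptyElim e, fun e => isEmptyElim e⟩
  | inr h =>
    have hk : 0 < k := by
      obtain ⟨e⟩ := h
      have h1 : 0 < mdeg ends univ ((ends e).1) := by
        unfold mdeg
        have : e ∈ univ.filter fun f => (ends f).1 = (ends e).1 :=
          mem_filter.2 ⟨mem_univ e, rfl⟩
        have hpos : 0 < (univ.filter fun f => (ends f).1 = (ends e).1).card :=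
          card_pos.2 ⟨e, this⟩
        omega
      exact lt_of_lt_of_le h1 (hdeg _)
    obtain ⟨c, hc⟩ := konig_aux ends hloopless A hA k hk hdeg univ
    exact ⟨c, fun e f hne hadj => hc e (mem_univ e) f (mem_univ f) hne hadj⟩
end

section
/- Every directed multigraph G can be edge-decomposed into k spanning subgraphs G_1, …, G_k such that for each vertex v and each i, |d⁺_{G_i}(v) − d⁺_G(v)/k| < 1 and |d⁻_{G_i}(v) − d⁻_G(v)/k| < 1. In particular, if d⁺_G(v) or d⁻_G(v) is divisible by k, then |d_{G_i}(v) − d_G(v)/k| < 1, where d_H(v) = d⁺_H(v) + d⁻_H(v). -/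
/-!
For `k = 2`, split every vertex `v` into a tail copy `(v, true)` and a head copy `(v, false)`,
so that the arcs become the edges of an undirected bipartite multigraph. Every undirected
multigraph has an orientation in which in- and out-degree differ by at most one at each vertex
(merge two edges `ab`, `bz` into `az`, orient by induction, and subdivide again); the arcs
oriented away from the tail side then form one half of an equitable halving.

For general `k`, take a colouring minimising the sum of the squared class degrees. If two
classes differ by two or more at some vertex, re-halving their union strictly lowers this sum.
So all class degrees at a vertex lie within one of each other, hence within less than one of
their average. If `k` divides the out-degree, each class has exactly its share of out-arcs,
so the total degree inherits the in-degree bound.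
-/

open Finset

variable {V E : Type*}

/-- Out-degree of `v` in the sub-digraph given by arc set `S`; `ends e = (tail, head)`. -/
def outdeg [DecidableEq V] (ends : E → V × V) (S : Finset E) (v : V) : ℕ :=
  (S.filter fun e => (ends e).1 = v).card

/-- In-degree of `v` in the sub-digraph given by arc set `S`. -/
def indeg [DecidableEq V] (ends : E → V × V) (S : Finset E) (v : V) : ℕ :=
  (S.filter fun e => (ends e).2 = v).card

section Degrees

variable [DecidableEq V] (ends : E → V × V)

lemma outdeg_insert [DecidableEq E] {S : Finset E} {e : E} (he : e ∉ S) (v : V) :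
    outdeg ends (insert e S) v = outdeg ends S v + if (ends e).1 = v then 1 else 0 := by
  unfold outdeg
  rw [filter_insert]
  split_ifs <;> simp [he]

lemma indeg_insert [DecidableEq E] {S : Finset E} {e : E} (he : e ∉ S) (v : V) :
    indeg ends (insert e S) v = indeg ends S v + if (ends e).2 = v then 1 else 0 :=
  outdeg_insert (Prod.swap ∘ ends) he v

variable {ends} in
lemma outdeg_congr {ends' : E → V × V} {S : Finset E} (h : ∀ e ∈ S, (ends e).1 = (ends' e).1)
    (v : V) : outdeg ends S v = outdeg ends' S v := by
  unfold outdeg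
  rw [filter_congr fun e he => by rw [h e he]]

variable {ends} in
lemma indeg_congr {ends' : E → V × V} {S : Finset E} (h : ∀ e ∈ S, (ends e).2 = (ends' e).2)
    (v : V) : indeg ends S v = indeg ends' S v :=
  outdeg_congr (ends := Prod.swap ∘ ends) (ends' := Prod.swap ∘ ends') h v

lemma outdeg_add_outdeg_sdiff [DecidableEq E] {S T : Finset E} (h : T ⊆ S) (v : V) :
    outdeg ends T v + outdeg ends (S \ T) v = outdeg ends S v := by
  unfold outdeg
  rw [← card_union_of_disjoint (disjoint_filter_filter disjoint_sdiff), ← filter_union,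
    union_sdiff_of_subset h]

lemma indeg_add_indeg_sdiff [DecidableEq E] {S T : Finset E} (h : T ⊆ S) (v : V) :
    indeg ends T v + indeg ends (S \ T) v = indeg ends S v :=
  outdeg_add_outdeg_sdiff (Prod.swap ∘ ends) h v

lemma sum_outdeg_fiberwise {ι : Type*} [Fintype ι] [DecidableEq ι] (S : Finset E) (c : E → ι)
    (v : V) : ∑ i, outdeg ends (S.filter (c · = i)) v = outdeg ends S v := by
  unfold outdeg
  rw [card_eq_sum_card_fiberwise (f := c) (t := univ) fun _ _ => mem_univ _]
  simp only [filter_filter, and_comm]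

lemma sum_indeg_fiberwise {ι : Type*} [Fintype ι] [DecidableEq ι] (S : Finset E) (c : E → ι)
    (v : V) : ∑ i, indeg ends (S.filter (c · = i)) v = indeg ends S v :=
  sum_outdeg_fiberwise (Prod.swap ∘ ends) S c v

end Degrees

section Orientation

variable {W : Type*} [DecidableEq W]

def IsBalanced (o : E → W × W) (S : Finset E) : Prop :=
  ∀ w, outdeg o S w ≤ indeg o S w + 1 ∧ indeg o S w ≤ outdeg o S w + 1

lemma IsBalanced.comp_swap {o : E → W × W} {S : Finset E} (h : IsBalanced o S) :
    IsBalanced (Prod.swap ∘ o) S :=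
  fun w => (h w).symm

lemma IsBalanced.subdivide [DecidableEq E] {o : E → W × W} {S : Finset E} (h : IsBalanced o S)
    {e e' : E} (he : e ∈ S) (he' : e' ∉ S) (b : W) :
    IsBalanced (Function.update (Function.update o e ((o e).1, b)) e' (b, (o e).2))
      (insert e' S) := by
  have hne : e ≠ e' := ne_of_mem_of_not_mem he he'
  set o' := Function.update (Function.update o e ((o e).1, b)) e' (b, (o e).2)
  have hS : S = insert e (S.erase e) := (insert_erase he).symm
  have he'S : e' ∉ insert e (S.erase e) := hS ▸ he'
  have hagree : ∀ x ∈ S.erase e, o' x = o x := fun x hx => by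
    have hxe' : x ≠ e' := ne_of_mem_of_not_mem (mem_of_mem_erase hx) he'
    simp [o', hxe', ne_of_mem_erase hx]
  intro w
  have hout : outdeg o' (insert e' S) w = outdeg o S w + if b = w then 1 else 0 := by
    rw [hS, outdeg_insert _ he'S, outdeg_insert _ (notMem_erase e S),
      outdeg_insert _ (notMem_erase e S),
      outdeg_congr fun x hx => congrArg Prod.fst (hagree x hx)]
    simp only [o', Function.update_self, Function.update_of_ne hne]
  have hin : indeg o' (insert e' S) w = indeg o S w + if b = w then 1 else 0 := by
    rw [hS, indeg_insert _ he'S, indeg_insert _ (notMem_erase e S),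
      indeg_insert _ (notMem_erase e S),
      indeg_congr fun x hx => congrArg Prod.snd (hagree x hx)]
    simp only [o', Function.update_self, Function.update_of_ne hne]
    omega
  have := h w
  omega

lemma exists_balanced_orientation [DecidableEq E] (f : E → Sym2 W) (S : Finset E) :
    ∃ o : E → W × W, (∀ e, s((o e).1, (o e).2) = f e) ∧ IsBalanced o S := by
  induction S using Finset.strongInduction generalizing f with
  | H S ih =>
  by_cases hshare : ∃ e ∈ S, ∃ e' ∈ S, e ≠ e' ∧ ∃ b, b ∈ f e ∧ b ∈ f e'
  · obtain ⟨e, he, e', he', hne, b, hbe, hbe'⟩ := hshare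
    obtain ⟨a, hfe⟩ := Sym2.mem_iff_exists.1 hbe
    obtain ⟨z, hfe'⟩ := Sym2.mem_iff_exists.1 hbe'
    obtain ⟨o, hof, hobal, hoe⟩ : ∃ o : E → W × W,
        (∀ x, s((o x).1, (o x).2) = Function.update f e s(a, z) x) ∧
          IsBalanced o (S.erase e') ∧ o e = (a, z) := by
      obtain ⟨o, hof, hobal⟩ :=
        ih (S.erase e') (erase_ssubset he') (Function.update f e s(a, z))
      have hoe : s((o e).1, (o e).2) = s((a, z).1, (a, z).2) := (hof e).trans (by simp)
      rcases Sym2.mk_eq_mk_iff.1 hoe with h | h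
      · exact ⟨o, hof, hobal, h⟩
      · exact ⟨Prod.swap ∘ o, fun x => Sym2.eq_swap.trans (hof x), hobal.comp_swap,
          congrArg Prod.swap h⟩
    refine ⟨_, fun x => ?_, insert_erase he' ▸ hobal.subdivide (mem_erase.2 ⟨hne, he⟩)
      (notMem_erase e' S) b⟩
    by_cases hxe' : x = e'
    · simp [hxe', hoe, hfe']
    by_cases hxe : x = e
    · simp [hxe, hne, hoe, hfe, Sym2.eq_swap]
    simpa [hxe, hxe'] using hof x
  · choose o ho using fun e => Sym2.mk_surjective (f e)
    refine ⟨o, ho, fun w => ?_⟩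
    have hout : outdeg o S w ≤ 1 := card_le_one.2 fun x hx y hy => by
      simp only [mem_filter] at hx hy
      by_contra hxy
      exact hshare ⟨x, hx.1, y, hy.1, hxy, w, hx.2 ▸ ho x ▸ Sym2.mem_mk_left _ _,
        hy.2 ▸ ho y ▸ Sym2.mem_mk_left _ _⟩
    have hin : indeg o S w ≤ 1 := card_le_one.2 fun x hx y hy => by
      simp only [mem_filter] at hx hy
      by_contra hxy
      exact hshare ⟨x, hx.1, y, hy.1, hxy, w, hx.2 ▸ ho x ▸ Sym2.mem_mk_right _ _,
        hy.2 ▸ ho y ▸ Sym2.mem_mk_right _ _⟩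
    omega

end Orientation

section Halving

variable [DecidableEq V] (ends : E → V × V)

def DegreesLeAddOne (S T : Finset E) : Prop :=
  ∀ v, outdeg ends S v ≤ outdeg ends T v + 1 ∧ indeg ends S v ≤ indeg ends T v + 1

lemma exists_halving [DecidableEq E] (S : Finset E) :
    ∃ T ⊆ S, DegreesLeAddOne ends T (S \ T) ∧ DegreesLeAddOne ends (S \ T) T := by
  obtain ⟨o, ho, hbal⟩ :=
    exists_balanced_orientation (fun e => s(((ends e).1, true), ((ends e).2, false))) S
  have hform : ∀ e, o e = (((ends e).1, true), ((ends e).2, false)) ∨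
      o e = (((ends e).2, false), ((ends e).1, true)) := fun e => Sym2.mk_eq_mk_iff.1 (ho e)
  set T := S.filter fun e => (o e).1.2 = true
  have hST : S \ T = S.filter fun e => ¬(o e).1.2 = true := (filter_not _ _).symm
  have hdeg : ∀ v, outdeg o S (v, true) = outdeg ends T v ∧
      indeg o S (v, true) = outdeg ends (S \ T) v ∧
      outdeg o S (v, false) = indeg ends (S \ T) v ∧ indeg o S (v, false) = indeg ends T v := by
    intro v
    refine ⟨?_, ?_, ?_, ?_⟩ <;> simp only [outdeg, indeg, T, hST, filter_filter] <;> congr 1 <;>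
      refine filter_congr fun e _ => ?_ <;> rcases hform e with h | h <;> simp [h]
  refine ⟨T, filter_subset _ _, fun v => ?_, fun v => ?_⟩
  · obtain ⟨h₁, h₂, h₃, h₄⟩ := hdeg v
    rw [← h₁, ← h₂, ← h₃, ← h₄]
    exact ⟨(hbal (v, true)).1, (hbal (v, false)).2⟩
  · obtain ⟨h₁, h₂, h₃, h₄⟩ := hdeg v
    rw [← h₁, ← h₂, ← h₃, ← h₄]
    exact ⟨(hbal (v, true)).2, (hbal (v, false)).1⟩

end Halving

lemma sq_add_sq_le_of_le_add_one {a b c d : ℕ} (hsum : c + d = a + b) (h₁ : c ≤ d + 1)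
    (h₂ : d ≤ c + 1) : c ^ 2 + d ^ 2 ≤ a ^ 2 + b ^ 2 := by
  rcases (by omega : c = d ∨ c = d + 1 ∨ d = c + 1) with rfl | rfl | rfl <;>
    rcases le_total a b with h | h <;> nlinarith

lemma sq_add_sq_lt_of_le_add_one {a b c d : ℕ} (hsum : c + d = a + b) (h₁ : c ≤ d + 1)
    (h₂ : d ≤ c + 1) (hab : b + 2 ≤ a) : c ^ 2 + d ^ 2 < a ^ 2 + b ^ 2 := by
  rcases (by omega : c = d ∨ c = d + 1 ∨ d = c + 1) with rfl | rfl | rfl <;> nlinarith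

lemma sum_lt_sum_of_lt_of_eq_off_pair {ι M : Type*} [Fintype ι] [DecidableEq ι]
    [AddCommMonoid M] [PartialOrder M] [IsOrderedCancelAddMonoid M] {g g' : ι → M} {i j : ι}
    (hij : i ≠ j) (h : ∀ l, l ≠ i → l ≠ j → g' l = g l)
    (hlt : g' i + g' j < g i + g j) :
    ∑ l, g' l < ∑ l, g l := by
  have hj : j ∈ univ.erase i := mem_erase.2 ⟨hij.symm, mem_univ j⟩
  have hrest : ∑ l ∈ (univ.erase i).erase j, g' l = ∑ l ∈ (univ.erase i).erase j, g l :=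
    sum_congr rfl fun l hl => h l (ne_of_mem_erase (mem_of_mem_erase hl)) (ne_of_mem_erase hl)
  rw [← add_sum_erase _ _ (mem_univ i), ← add_sum_erase _ _ hj,
    ← add_sum_erase _ _ (mem_univ i), ← add_sum_erase _ _ hj, hrest, ← add_assoc,
    ← add_assoc]
  exact add_lt_add_left hlt _

lemma abs_sub_sum_div_card_lt_one {ι : Type*} [Fintype ι] (x : ι → ℝ)
    (h : ∀ a b, x a ≤ x b + 1) (i : ι) : |x i - (∑ l, x l) / Fintype.card ι| < 1 := by
  have hcard : (0 : ℝ) < Fintype.card ι := by exact_mod_cast Fintype.card_pos_iff.2 ⟨i⟩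
  have hupper : ∑ l, x l < ∑ _l : ι, (x i + 1) :=
    sum_lt_sum (fun l _ => h l i) ⟨i, mem_univ i, lt_add_one _⟩
  have hlower : ∑ _l : ι, (x i - 1) < ∑ l, x l :=
    sum_lt_sum (fun l _ => by linarith [h i l]) ⟨i, mem_univ i, sub_one_lt _⟩
  simp only [sum_const, card_univ, nsmul_eq_mul] at hupper hlower
  rw [abs_sub_lt_iff, sub_lt_comm, lt_div_iff₀ hcard, sub_lt_iff_lt_add', div_lt_iff₀ hcard]
  constructor <;> linarith

section Coloring

variable [Fintype V] [DecidableEq V] (ends : E → V × V)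

def sqDegreeSum (S : Finset E) : ℕ :=
  ∑ v, (outdeg ends S v ^ 2 + indeg ends S v ^ 2)

variable {ends} in
lemma sqDegreeSum_add_lt {A B C D : Finset E} (hAB : DegreesLeAddOne ends A B)
    (hBA : DegreesLeAddOne ends B A)
    (hout : ∀ v, outdeg ends A v + outdeg ends B v = outdeg ends C v + outdeg ends D v)
    (hin : ∀ v, indeg ends A v + indeg ends B v = indeg ends C v + indeg ends D v)
    (hCD : ¬DegreesLeAddOne ends C D) :
    sqDegreeSum ends A + sqDegreeSum ends B < sqDegreeSum ends C + sqDegreeSum ends D := by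
  simp only [sqDegreeSum, ← sum_add_distrib]
  obtain ⟨v, hv⟩ := not_forall.1 hCD
  have hle : ∀ w, outdeg ends A w ^ 2 + outdeg ends B w ^ 2 ≤
      outdeg ends C w ^ 2 + outdeg ends D w ^ 2 ∧
      indeg ends A w ^ 2 + indeg ends B w ^ 2 ≤ indeg ends C w ^ 2 + indeg ends D w ^ 2 :=
    fun w => ⟨sq_add_sq_le_of_le_add_one (hout w) (hAB w).1 (hBA w).1,
      sq_add_sq_le_of_le_add_one (hin w) (hAB w).2 (hBA w).2⟩
  refine sum_lt_sum (fun w _ => by have := hle w; omega) ⟨v, mem_univ v, ?_⟩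
  have := hle v
  rcases not_and_or.1 hv with h | h
  · have := sq_add_sq_lt_of_le_add_one (hout v) (hAB v).1 (hBA v).1 (by omega)
    omega
  · have := sq_add_sq_lt_of_le_add_one (hin v) (hAB v).2 (hBA v).2 (by omega)
    omega

variable [Fintype E] {ι : Type*} [Fintype ι] [DecidableEq ι]

def colorPotential (c : E → ι) : ℕ :=
  ∑ i, sqDegreeSum ends (univ.filter (c · = i))

lemma exists_colorPotential_lt (c : E → ι) {i j : ι}
    (h : ¬DegreesLeAddOne ends (univ.filter (c · = i)) (univ.filter (c · = j))) :
    ∃ c' : E → ι, colorPotential ends c' < colorPotential ends c := by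
  classical
  have hij : i ≠ j := by
    rintro rfl
    exact h fun v => ⟨Nat.le_succ _, Nat.le_succ _⟩
  set S := univ.filter fun e => c e = i ∨ c e = j
  obtain ⟨T, hTS, hT, hT'⟩ := exists_halving ends S
  set c' : E → ι := fun e => if e ∈ T then i else if e ∈ S then j else c e
  have hci : univ.filter (c · = i) ⊆ S := fun e he => by simp_all [S]
  have hcj : univ.filter (c · = j) = S \ univ.filter (c · = i) := by
    ext e; by_cases hei : c e = i <;> simp [S, hei, hij]
  have hc'i : univ.filter (c' · = i) = T := by
    ext e; have := @hTS e; grind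
  have hc'j : univ.filter (c' · = j) = S \ T := by
    ext e; have := @hTS e; grind
  have hc'l : ∀ l, l ≠ i → l ≠ j → univ.filter (c' · = l) = univ.filter (c · = l) := by
    intro l hli hlj; ext e; have := @hTS e; grind
  refine ⟨c', sum_lt_sum_of_lt_of_eq_off_pair hij (fun l hi hj => by rw [hc'l l hi hj]) ?_⟩
  rw [hc'i, hc'j, hcj]
  exact sqDegreeSum_add_lt hT hT'
    (fun v => by rw [outdeg_add_outdeg_sdiff _ hTS, outdeg_add_outdeg_sdiff _ hci])
    (fun v => by rw [indeg_add_indeg_sdiff _ hTS, indeg_add_indeg_sdiff _ hci]) (hcj ▸ h)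

lemma exists_balanced_coloring [Nonempty ι] :
    ∃ c : E → ι, ∀ i j,
      DegreesLeAddOne ends (univ.filter (c · = i)) (univ.filter (c · = j)) := by
  obtain ⟨c, hc⟩ := Finite.exists_min (colorPotential ends (ι := ι))
  refine ⟨c, fun i j => by_contra fun h => ?_⟩
  obtain ⟨c', hc'⟩ := exists_colorPotential_lt ends c h
  exact not_lt.2 (hc c') hc'

end Coloring

lemma cast_eq_div_of_abs_sub_lt_one {k x D : ℕ} (hD : k ∣ D) (h : |(x : ℝ) - D / k| < 1) :
    (x : ℝ) = D / k := by
  obtain ⟨d, rfl⟩ := hD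
  rcases eq_or_ne k 0 with rfl | hk
  · simp_all
  rw [Nat.cast_mul, mul_div_cancel_left₀ _ (Nat.cast_ne_zero.2 hk)] at h ⊢
  have : |((x : ℤ) - d : ℤ)| < 1 := by exact_mod_cast h
  exact_mod_cast (sub_eq_zero.1 (Int.abs_lt_one_iff.1 this))

lemma abs_add_sub_div_lt_one {k a b A B : ℕ} (ha : |(a : ℝ) - A / k| < 1)
    (hb : |(b : ℝ) - B / k| < 1) (hdvd : k ∣ A ∨ k ∣ B) :
    |((a + b : ℕ) : ℝ) - ((A + B : ℕ) : ℝ) / k| < 1 := by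
  rcases hdvd with hA | hB
  · convert hb using 2
    rw [Nat.cast_add, Nat.cast_add, add_div, cast_eq_div_of_abs_sub_lt_one hA ha]
    ring
  · convert ha using 2
    rw [Nat.cast_add, Nat.cast_add, add_div, cast_eq_div_of_abs_sub_lt_one hB hb]
    ring

lemma abs_deg_sub_div_card_lt_one [DecidableEq V] [Fintype E] {ι : Type*} [Fintype ι]
    [DecidableEq ι] (ends : E → V × V) {c : E → ι}
    (hc : ∀ i j, DegreesLeAddOne ends (univ.filter (c · = i)) (univ.filter (c · = j)))
    (v : V) (i : ι) :
    |(outdeg ends (univ.filter (c · = i)) v : ℝ) - outdeg ends univ v / Fintype.card ι| < 1 ∧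
    |(indeg ends (univ.filter (c · = i)) v : ℝ) - indeg ends univ v / Fintype.card ι| < 1 := by
  have hout := abs_sub_sum_div_card_lt_one (fun l => (outdeg ends (univ.filter (c · = l)) v : ℝ))
    (fun a b => by exact_mod_cast (hc a b v).1) i
  have hin := abs_sub_sum_div_card_lt_one (fun l => (indeg ends (univ.filter (c · = l)) v : ℝ))
    (fun a b => by exact_mod_cast (hc a b v).2) i
  rw [← Nat.cast_sum, sum_outdeg_fiberwise] at hout
  rw [← Nat.cast_sum, sum_indeg_fiberwise] at hin
  exact ⟨hout, hin⟩

/-- Every directed multigraph has an edge-decomposition into `k` factors equitable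
with respect to both out-degrees and in-degrees; in particular the total degrees are
equitable at each vertex whose out-degree or in-degree is divisible by `k`. -/
theorem directed_equitable_factorization [Fintype V] [Fintype E] [DecidableEq V]
    (ends : E → V × V) (k : ℕ) (hk : 0 < k) :
    ∃ c : E → Fin k, ∀ v : V, ∀ i : Fin k,
      (|((outdeg ends (univ.filter fun e => c e = i) v : ℝ)) -
          (outdeg ends univ v : ℝ) / (k : ℝ)| < 1) ∧
      (|((indeg ends (univ.filter fun e => c e = i) v : ℝ)) -
          (indeg ends univ v : ℝ) / (k : ℝ)| < 1) ∧
      ((k ∣ outdeg ends univ v ∨ k ∣ indeg ends univ v) →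
        |((outdeg ends (univ.filter fun e => c e = i) v +
            indeg ends (univ.filter fun e => c e = i) v : ℕ) : ℝ) -
          ((outdeg ends univ v + indeg ends univ v : ℕ) : ℝ) / (k : ℝ)| < 1) := by
  have : NeZero k := ⟨hk.ne'⟩
  obtain ⟨c, hc⟩ := exists_balanced_coloring ends (ι := Fin k)
  refine ⟨c, fun v i => ?_⟩
  obtain ⟨hout, hin⟩ := abs_deg_sub_div_card_lt_one ends hc v i
  rw [Fintype.card_fin] at hout hin
  exact ⟨hout, hin, abs_add_sub_div_lt_one hout hin⟩
end

section
/- Every directed multigraph G can be edge-decomposed into k spanning subgraphs G_1, …, G_k such that for each vertex v and each i, |d⁺_{G_i}(v) − d⁺_G(v)/k| < 1 and |d⁻_{G_i}(v) − d⁻_G(v)/k| < 1, and moreover | |E(G_i)| − |E(G)|/k | < 1 for each i. -/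
open Finset

variable {V E : Type*}

/-!
Two colours first. Pair up the arcs leaving each vertex, and pair the arcs left over at
vertices of odd out-degree among themselves; pair up the arcs entering each vertex. The two
pairings form a graph of maximum degree two in which every cycle alternates between them, so
it has a proper 2-colouring, and in such a colouring both colour classes are balanced at every
tail, at every head and in total.

For `k` colours take a colouring minimising the sum of the squares of all colour-class sizes
at tails, at heads and in total. If two colours `i`, `j` differed by two or more anywhere, the
two-colour case applied to the arcs coloured `i` or `j` would rebalance them everywhere and
strictly lower that sum.
-/

section Pairings

variable {α A B : Type*}

def imbalance (b : E → Bool) (S : Finset E) : ℤ :=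
  ∑ e ∈ S, if b e then 1 else -1

lemma abs_imbalance_le_card (b : E → Bool) (S : Finset E) : |imbalance b S| ≤ #S := by
  unfold imbalance
  refine (abs_sum_le_sum_abs _ _).trans ?_
  rw [card_eq_sum_ones, Nat.cast_sum]
  exact sum_le_sum fun e _ => by split_ifs <;> simp

lemma imbalance_eq_card_sub_card (b : E → Bool) (S : Finset E) :
    imbalance b S = #{e ∈ S | b e = true} - #{e ∈ S | b e = false} := by
  simp only [imbalance, sum_ite, sum_const, Bool.not_eq_true]
  ring

lemma imbalance_erase_erase [DecidableEq E] (b : E → Bool) {S : Finset E} {x y : E}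
    (hx : x ∈ S) (hy : y ∈ S) (hxy : x ≠ y) (hb : b x ≠ b y) :
    imbalance b ((S.erase x).erase y) = imbalance b S := by
  unfold imbalance
  rw [← add_sum_erase S _ hx, ← add_sum_erase (S.erase x) _ (mem_erase.2 ⟨hxy.symm, hy⟩)]
  cases hbx : b x <;> cases hby : b y <;> simp_all

def FibersAtMostTwo (s : Finset E) (p : E → α) : Prop :=
  ∀ a ∈ s, ∀ b ∈ s, ∀ c ∈ s, p a = p b → p a = p c → a = b ∨ a = c ∨ b = c

def SplitsFibers (b : E → Bool) (s : Finset E) (p : E → α) : Prop :=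
  ∀ e ∈ s, ∀ e' ∈ s, e ≠ e' → p e = p e' → b e ≠ b e'

lemma FibersAtMostTwo.mono {s t : Finset E} {p : E → α} (h : FibersAtMostTwo s p)
    (hts : t ⊆ s) : FibersAtMostTwo t p :=
  fun a ha b hb c hc => h a (hts ha) b (hts hb) c (hts hc)

lemma FibersAtMostTwo.eq_of_eq {s : Finset E} {p : E → α} (h : FibersAtMostTwo s p)
    {z a a' : E} (hz : z ∈ s) (ha : a ∈ s) (ha' : a' ∈ s) (hza : a ≠ z) (hza' : a' ≠ z)
    (hpa : p a = p z) (hpa' : p a' = p z) : a = a' := by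
  rcases h z hz a ha a' ha' hpa.symm hpa'.symm with h | h | h
  exacts [absurd h.symm hza, absurd h.symm hza', h]

variable [DecidableEq E]

lemma FibersAtMostTwo.erase_merge [DecidableEq α] {s : Finset E} {q : E → α}
    (hq : FibersAtMostTwo s q) {x y : E} (hx : x ∈ s) (hy : y ∈ s) :
    FibersAtMostTwo ((s.erase x).erase y) fun e => if q e = q y then q x else q e := by
  intro a ha b hb c hc hab hac
  simp only [mem_erase] at ha hb hc
  have uniq : ∀ e e', e ≠ y ∧ e ≠ x ∧ e ∈ s → e' ≠ y ∧ e' ≠ x ∧ e' ∈ s → q e = q e' →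
      (q e = q x ∨ q e = q y) → e = e' := by
    rintro e e' he he' h (h' | h')
    · exact hq.eq_of_eq hx he.2.2 he'.2.2 he.2.1 he'.2.1 h' (h.symm.trans h')
    · exact hq.eq_of_eq hy he.2.2 he'.2.2 he.1 he'.1 h' (h.symm.trans h')
  by_cases hxa : q a = q x ∨ q a = q y
  · have hax : (if q a = q y then q x else q a) = q x := by split_ifs <;> tauto
    have merged : ∀ e, (if q e = q y then q x else q e) = q x → q e = q x ∨ q e = q y := by
      intro e he; split_ifs at he <;> tauto
    rcases hxa with h1 | h1 <;> rcases merged b (hab.symm.trans hax) with h2 | h2 <;>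
      rcases merged c (hac.symm.trans hax) with h3 | h3 <;>
      first
      | exact Or.inl (uniq a b ha hb (h1.trans h2.symm) (by tauto))
      | exact Or.inr (Or.inl (uniq a c ha hc (h1.trans h3.symm) (by tauto)))
      | exact Or.inr (Or.inr (uniq b c hb hc (h2.trans h3.symm) (by tauto)))
  · have unmerged : ∀ e, ((if q e = q y then q x else q e) = if q a = q y then q x else q a) →
        q e = q a := by
      intro e he; split_ifs at he <;> tauto
    exact hq a ha.2.2 b hb.2.2 c hc.2.2 (unmerged b hab.symm).symm (unmerged c hac.symm).symm

lemma exists_bool_of_splitsFibers_erase_merge [DecidableEq α] {s : Finset E} {q : E → α}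
    (hq : FibersAtMostTwo s q) {x y : E} (hx : x ∈ s) (hy : y ∈ s) (hxy : x ≠ y) {b : E → Bool}
    (hb : SplitsFibers b ((s.erase x).erase y) fun e => if q e = q y then q x else q e) :
    ∃ t : Bool, (∀ e ∈ (s.erase x).erase y, q e = q x → b e ≠ t) ∧
      (∀ e ∈ (s.erase x).erase y, q e = q y → b e = t) := by
  have mem : ∀ {e}, e ∈ (s.erase x).erase y → e ≠ y ∧ e ≠ x ∧ e ∈ s := by simp
  by_cases hy' : ∃ e ∈ (s.erase x).erase y, q e = q y
  · obtain ⟨e₀, he₀, hqe₀⟩ := hy'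
    refine ⟨b e₀, fun e he hqe => hb e he e₀ he₀ ?_ (by simp [hqe, hqe₀]), fun e he hqe => ?_⟩
    · rintro rfl
      exact hxy (hq.eq_of_eq (mem he).2.2 hx hy (mem he).2.1.symm (mem he).1.symm hqe.symm
        hqe₀.symm)
    · rw [hq.eq_of_eq hy (mem he).2.2 (mem he₀).2.2 (mem he).1 (mem he₀).1 hqe hqe₀]
  by_cases hx' : ∃ e ∈ (s.erase x).erase y, q e = q x
  · obtain ⟨e₁, he₁, hqe₁⟩ := hx'
    refine ⟨!b e₁, fun e he hqe => ?_, fun e he hqe => absurd ⟨e, he, hqe⟩ hy'⟩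
    rw [hq.eq_of_eq hx (mem he).2.2 (mem he₁).2.2 (mem he).2.1 (mem he₁).2.1 hqe hqe₁]
    simp
  exact ⟨true, fun e he hqe => absurd ⟨e, he, hqe⟩ hx', fun e he hqe => absurd ⟨e, he, hqe⟩ hy'⟩

/-- Contracting the `p`-pair `{x, y}`: its two `q`-partners must receive different colours,
which is what merging their `q`-fibres enforces. -/
lemma exists_splitsFibers_of_erase_pair [DecidableEq α] {s : Finset E} {p q : E → α} {x y : E}
    (hx : x ∈ s) (hy : y ∈ s) (hxy : x ≠ y) (hpxy : p x = p y)
    (hp : FibersAtMostTwo s p) (hq : FibersAtMostTwo s q)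
    (ih : ∀ p q : E → α, FibersAtMostTwo ((s.erase x).erase y) p →
      FibersAtMostTwo ((s.erase x).erase y) q →
      ∃ b, SplitsFibers b ((s.erase x).erase y) p ∧ SplitsFibers b ((s.erase x).erase y) q) :
    ∃ b, SplitsFibers b s p ∧ SplitsFibers b s q := by
  set s' := (s.erase x).erase y
  have mem : ∀ {e}, e ∈ s' → e ≠ y ∧ e ≠ x ∧ e ∈ s := by simp [s']
  have trichotomy : ∀ e ∈ s, e = x ∨ e = y ∨ e ∈ s' := by
    intro e he; by_cases h1 : e = x <;> by_cases h2 : e = y <;> simp_all [s']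
  obtain ⟨b', hbp, hbq⟩ := ih p _ (hp.mono fun e he => (mem he).2.2) (hq.erase_merge hx hy)
  obtain ⟨t, htx, hty⟩ := exists_bool_of_splitsFibers_erase_merge hq hx hy hxy hbq
  have hp_out : ∀ e ∈ s', p e ≠ p x := fun e he hpe =>
    (mem he).1 (hp.eq_of_eq hx (mem he).2.2 hy (mem he).2.1 hxy.symm hpe hpxy.symm)
  set b : E → Bool := fun e => if e = x then t else if e = y then !t else b' e
  have hbx : b x = t := by simp [b]
  have hby : b y = !t := by simp [b, hxy.symm]
  have hbs' : ∀ e ∈ s', b e = b' e := fun e he => by simp [b, (mem he).1, (mem he).2.1]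
  refine ⟨b, ?_, ?_⟩
  · intro e he e' he' hne hpe
    rcases trichotomy e he with rfl | rfl | he₁ <;> rcases trichotomy e' he' with rfl | rfl | he₁'
    all_goals first
      | exact absurd rfl hne
      | (simp [hbx, hby]; done)
      | exact absurd hpe (hp_out _ he₁').symm
      | exact absurd (hpe.trans hpxy.symm) (hp_out _ he₁)
      | exact absurd (hpe.symm.trans hpxy.symm) (hp_out _ he₁')
      | exact absurd hpe (hp_out _ he₁)
      | (rw [hbs' e he₁, hbs' e' he₁']; exact hbp e he₁ e' he₁' hne hpe)
  · intro e he e' he' hne hqe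
    rcases trichotomy e he with rfl | rfl | he₁ <;> rcases trichotomy e' he' with rfl | rfl | he₁'
    all_goals first
      | exact absurd rfl hne
      | (simp [hbx, hby]; done)
      | (rw [hbx, hbs' e' he₁']; exact (htx e' he₁' hqe.symm).symm)
      | (rw [hby, hbs' e' he₁', hty e' he₁' hqe.symm]; simp)
      | (rw [hbx, hbs' e he₁]; exact htx e he₁ hqe)
      | (rw [hby, hbs' e he₁, hty e he₁ hqe]; simp)
      | (rw [hbs' e he₁, hbs' e' he₁']
         exact hbq e he₁ e' he₁' hne (by simp only [hqe]))

lemma exists_splitsFibers [DecidableEq α] (s : Finset E) (p q : E → α)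
    (hp : FibersAtMostTwo s p) (hq : FibersAtMostTwo s q) :
    ∃ b, SplitsFibers b s p ∧ SplitsFibers b s q := by
  induction s using Finset.strongInduction generalizing p q with
  | H s ih =>
  have ih' : ∀ x ∈ s, ∀ y, ∀ p q : E → α, FibersAtMostTwo ((s.erase x).erase y) p →
      FibersAtMostTwo ((s.erase x).erase y) q →
      ∃ b, SplitsFibers b ((s.erase x).erase y) p ∧ SplitsFibers b ((s.erase x).erase y) q :=
    fun x hx y => ih _ ((erase_subset y _).trans_ssubset (erase_ssubset hx))
  by_cases hP : ∃ x ∈ s, ∃ y ∈ s, x ≠ y ∧ p x = p y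
  · obtain ⟨x, hx, y, hy, hxy, hpxy⟩ := hP
    exact exists_splitsFibers_of_erase_pair hx hy hxy hpxy hp hq (ih' x hx y)
  by_cases hQ : ∃ x ∈ s, ∃ y ∈ s, x ≠ y ∧ q x = q y
  · obtain ⟨x, hx, y, hy, hxy, hqxy⟩ := hQ
    obtain ⟨b, hbq, hbp⟩ := exists_splitsFibers_of_erase_pair hx hy hxy hqxy hq hp
      fun q p hq hp => (ih' x hx y p q hp hq).imp fun _ => And.symm
    exact ⟨b, hbp, hbq⟩
  exact ⟨fun _ => true, fun e he e' he' hne h => absurd ⟨e, he, e', he', hne, h⟩ hP,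
    fun e he e' he' hne h => absurd ⟨e, he, e', he', hne, h⟩ hQ⟩

def BalancingPairing [DecidableEq A] (f : E → A) (s : Finset E) (p : E → ℕ) : Prop :=
  FibersAtMostTwo s p ∧ ∀ b, SplitsFibers b s p →
    (∀ a, |imbalance b {e ∈ s | f e = a}| ≤ 1) ∧ |imbalance b s| ≤ 1

lemma FibersAtMostTwo.add_pair {s : Finset E} {p : E → ℕ} {x y : E}
    (hp : FibersAtMostTwo ((s.erase x).erase y) p) :
    FibersAtMostTwo s fun e => if e = x ∨ e = y then 0 else p e + 1 := by
  intro a ha b hb c hc hab hac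
  by_cases hxya : a = x ∨ a = y
  · have hxyb : b = x ∨ b = y := by by_contra h; simp_all
    have hxyc : c = x ∨ c = y := by by_contra h; simp_all
    rcases hxya with rfl | rfl <;> rcases hxyb with rfl | rfl <;> rcases hxyc with rfl | rfl <;>
      simp
  · have hxyb : ¬(b = x ∨ b = y) := by intro h; simp_all
    have hxyc : ¬(c = x ∨ c = y) := by intro h; simp_all
    simp only [hxya, hxyb, hxyc, if_false, add_left_inj] at hab hac
    simp only [not_or] at hxya hxyb hxyc
    exact hp a (by simp [*]) b (by simp [*]) c (by simp [*]) hab hac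

lemma exists_balancingPairing_of_erase_pair [DecidableEq A] {f : E → A} {s : Finset E}
    {x y : E} (hx : x ∈ s) (hy : y ∈ s) (hxy : x ≠ y)
    (hf : f x = f y ∨ Set.InjOn f s)
    (ih : ∃ p, BalancingPairing f ((s.erase x).erase y) p) :
    ∃ p, BalancingPairing f s p := by
  obtain ⟨p', hp'_two, hp'_bal⟩ := ih
  set s' := (s.erase x).erase y
  have mem_s' : ∀ e, e ∈ s' ↔ e ≠ y ∧ e ≠ x ∧ e ∈ s := by simp [s']
  refine ⟨fun e => if e = x ∨ e = y then 0 else p' e + 1, hp'_two.add_pair, fun b hb => ?_⟩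
  have hbxy : b x ≠ b y := hb x hx y hy hxy (by simp)
  have hb' : SplitsFibers b s' p' := by
    intro e he e' he' hne h
    rw [mem_s'] at he he'
    exact hb e he.2.2 e' he'.2.2 hne (by simp [he.1, he.2.1, he'.1, he'.2.1, h])
  obtain ⟨hfib, htot⟩ := hp'_bal b hb'
  refine ⟨fun a => ?_, by rwa [← imbalance_erase_erase b hx hy hxy hbxy]⟩
  have hfib_eq : {e ∈ s' | f e = a} = ({e ∈ s | f e = a}.erase x).erase y := by
    simp [s', filter_erase]
  rcases hf with hf | hinj
  · by_cases hxa : f x = a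
    · rw [← imbalance_erase_erase b (by simp [hx, hxa]) (by simp [hy, ← hf, hxa]) hxy hbxy,
        ← hfib_eq]
      exact hfib a
    · rw [erase_eq_of_notMem (by simp [hf ▸ hxa]), erase_eq_of_notMem (by simp [hxa])]
        at hfib_eq
      exact hfib_eq ▸ hfib a
  · refine (abs_imbalance_le_card b _).trans ?_
    exact_mod_cast card_le_one.2 fun e he e' he' => by
      simp only [mem_filter] at he he'
      exact hinj he.1 he'.1 (he.2.trans he'.2.symm)

lemma exists_balancingPairing [DecidableEq A] (f : E → A) (s : Finset E) :
    ∃ p, BalancingPairing f s p := by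
  induction s using Finset.strongInduction with
  | H s ih =>
  have ih' : ∀ x ∈ s, ∀ y, ∃ p, BalancingPairing f ((s.erase x).erase y) p :=
    fun x hx y => ih _ ((erase_subset y _).trans_ssubset (erase_ssubset hx))
  by_cases hsame : ∃ x ∈ s, ∃ y ∈ s, x ≠ y ∧ f x = f y
  · obtain ⟨x, hx, y, hy, hxy, hf⟩ := hsame
    exact exists_balancingPairing_of_erase_pair hx hy hxy (Or.inl hf) (ih' x hx y)
  by_cases htwo : ∃ x ∈ s, ∃ y ∈ s, x ≠ y
  · obtain ⟨x, hx, y, hy, hxy⟩ := htwo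
    refine exists_balancingPairing_of_erase_pair hx hy hxy (Or.inr ?_) (ih' x hx y)
    intro e he e' he' h
    by_contra hne
    exact hsame ⟨e, he, e', he', hne, h⟩
  have hs : #s ≤ 1 := card_le_one.2 fun e he e' he' => by
    by_contra hne
    exact htwo ⟨e, he, e', he', hne⟩
  refine ⟨fun _ => 0, fun a ha b hb _ _ _ _ => Or.inl (card_le_one.1 hs a ha b hb),
    fun b _ => ⟨fun a => ?_, ?_⟩⟩
  · exact (abs_imbalance_le_card b _).trans (by exact_mod_cast (card_filter_le _ _).trans hs)
  · exact (abs_imbalance_le_card b _).trans (by exact_mod_cast hs)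

theorem exists_balanced_bool_coloring [DecidableEq A] [DecidableEq B]
    (f : E → A) (g : E → B) (s : Finset E) :
    ∃ b : E → Bool, (∀ a, |imbalance b {e ∈ s | f e = a}| ≤ 1) ∧
      (∀ a, |imbalance b {e ∈ s | g e = a}| ≤ 1) ∧ |imbalance b s| ≤ 1 := by
  obtain ⟨p, hp_two, hp_bal⟩ := exists_balancingPairing f s
  obtain ⟨q, hq_two, hq_bal⟩ := exists_balancingPairing g s
  obtain ⟨b, hbp, hbq⟩ := exists_splitsFibers s p q hp_two hq_two
  exact ⟨b, (hp_bal b hbp).1, (hq_bal b hbq).1, (hp_bal b hbp).2⟩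

end Pairings

lemma sq_add_sq_le_of_abs_sub_le_one {a b a' b' : ℤ} (hsum : a' + b' = a + b)
    (hbal : |a' - b'| ≤ 1) : a' ^ 2 + b' ^ 2 ≤ a ^ 2 + b ^ 2 := by
  obtain ⟨hlo, hhi⟩ := abs_le.1 hbal
  -- `a - b = (a' - b') + 2 (b' - b)` has the parity of `a' - b'`
  have hm : 0 ≤ (b' - b) * (b' - b + (a' - b')) := by
    rcases (by omega : b' - b ≤ -1 ∨ b' - b = 0 ∨ 1 ≤ b' - b) with h | h | h
    · exact mul_nonneg_of_nonpos_of_nonpos (by linarith) (by linarith)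
    · simp [h]
    · exact mul_nonneg (by linarith) (by linarith)
  have ha : a = a' + b' - b := by linarith
  have : a ^ 2 + b ^ 2 - (a' ^ 2 + b' ^ 2) = 2 * ((b' - b) * (b' - b + (a' - b'))) := by
    rw [ha]; ring
  linarith

lemma sq_add_sq_lt_of_abs_sub_le_one {a b a' b' : ℤ} (hsum : a' + b' = a + b)
    (hbal : |a' - b'| ≤ 1) (hab : b + 2 ≤ a) : a' ^ 2 + b' ^ 2 < a ^ 2 + b ^ 2 := by
  have h1 : (a' - b') ^ 2 ≤ 1 := by
    rw [← sq_abs]; nlinarith [abs_nonneg (a' - b')]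
  have h2 : 4 ≤ (a - b) ^ 2 := by nlinarith
  have : 2 * (a ^ 2 + b ^ 2) - 2 * (a' ^ 2 + b' ^ 2) = (a - b) ^ 2 - (a' - b') ^ 2 := by
    rw [show a' = a + b - b' by linarith]; ring
  linarith

lemma sum_sq_le_of_rebalance {k : ℕ} {x x' : Fin k → ℕ} {i j : Fin k} (hij : i ≠ j)
    (hother : ∀ l, l ≠ i → l ≠ j → x' l = x l) (hsum : x' i + x' j = x i + x j)
    (hbal : |(x' i : ℤ) - x' j| ≤ 1) :
    ∑ l, x' l ^ 2 ≤ ∑ l, x l ^ 2 ∧ (x j + 2 ≤ x i → ∑ l, x' l ^ 2 < ∑ l, x l ^ 2) := by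
  have hdiff : (∑ l, (x' l : ℤ) ^ 2) - ∑ l, (x l : ℤ) ^ 2 =
      ((x' i : ℤ) ^ 2 + (x' j : ℤ) ^ 2) - ((x i : ℤ) ^ 2 + (x j : ℤ) ^ 2) := by
    rw [← sum_sub_distrib, Fintype.sum_eq_add i j hij fun l hl => by rw [hother l hl.1 hl.2]; ring]
    ring
  have hsum' : (x' i : ℤ) + x' j = x i + x j := by exact_mod_cast hsum
  constructor
  · have := sq_add_sq_le_of_abs_sub_le_one hsum' hbal
    have : (∑ l, (x' l : ℤ) ^ 2) ≤ ∑ l, (x l : ℤ) ^ 2 := by linarith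
    exact_mod_cast this
  · intro hgap
    have := sq_add_sq_lt_of_abs_sub_le_one hsum' hbal (by exact_mod_cast hgap)
    have : (∑ l, (x' l : ℤ) ^ 2) < ∑ l, (x l : ℤ) ^ 2 := by linarith
    exact_mod_cast this

section Recolouring

variable {ι : Type*} {k : ℕ}

def recolor (c : E → Fin k) (i j : Fin k) (b : E → Bool) (e : E) : Fin k :=
  if c e = i ∨ c e = j then (if b e then i else j) else c e

lemma card_filter_recolor_of_ne (c : E → Fin k) {i j l : Fin k} (b : E → Bool) (S : Finset E)
    (hi : l ≠ i) (hj : l ≠ j) : #{e ∈ S | recolor c i j b e = l} = #{e ∈ S | c e = l} := by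
  congr 1
  refine filter_congr fun e _ => ?_
  unfold recolor
  split_ifs <;> grind

lemma card_filter_recolor_left (c : E → Fin k) {i j : Fin k} (hij : i ≠ j) (b : E → Bool)
    (S : Finset E) :
    #{e ∈ S | recolor c i j b e = i} = #{e ∈ {e ∈ S | c e = i ∨ c e = j} | b e = true} := by
  congr 1
  ext e
  rw [mem_filter, mem_filter, mem_filter]
  unfold recolor
  split_ifs <;> grind

lemma card_filter_recolor_right (c : E → Fin k) {i j : Fin k} (hij : i ≠ j) (b : E → Bool)
    (S : Finset E) :
    #{e ∈ S | recolor c i j b e = j} = #{e ∈ {e ∈ S | c e = i ∨ c e = j} | b e = false} := by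
  congr 1
  ext e
  rw [mem_filter, mem_filter, mem_filter]
  unfold recolor
  split_ifs <;> grind

lemma card_filter_recolor_add [DecidableEq E] (c : E → Fin k) {i j : Fin k} (hij : i ≠ j)
    (b : E → Bool) (S : Finset E) :
    #{e ∈ S | recolor c i j b e = i} + #{e ∈ S | recolor c i j b e = j} =
      #{e ∈ S | c e = i} + #{e ∈ S | c e = j} := by
  rw [card_filter_recolor_left c hij, card_filter_recolor_right c hij]
  simp only [← Bool.not_eq_true]
  rw [card_filter_add_card_filter_not, filter_or,
    card_union_of_disjoint (disjoint_filter.2 fun e _ h h' => hij (h.symm.trans h'))]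

def energy [Fintype ι] (T : ι → Finset E) (c : E → Fin k) : ℕ :=
  ∑ κ, ∑ l, #{e ∈ T κ | c e = l} ^ 2

lemma energy_recolor_lt [DecidableEq E] [Fintype ι] (T : ι → Finset E) (c : E → Fin k)
    {i j : Fin k} (b : E → Bool) (hb : ∀ κ, |imbalance b {e ∈ T κ | c e = i ∨ c e = j}| ≤ 1)
    {κ₀ : ι} (hgap : #{e ∈ T κ₀ | c e = j} + 2 ≤ #{e ∈ T κ₀ | c e = i}) :
    energy T (recolor c i j b) < energy T c := by
  have hij : i ≠ j := by rintro rfl; omega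
  have key : ∀ κ, _ := fun κ => sum_sq_le_of_rebalance hij
    (x := fun l => #{e ∈ T κ | c e = l}) (x' := fun l => #{e ∈ T κ | recolor c i j b e = l})
    (fun l hi hj => card_filter_recolor_of_ne c b _ hi hj) (card_filter_recolor_add c hij b _)
    (by rw [card_filter_recolor_left c hij, card_filter_recolor_right c hij,
      ← imbalance_eq_card_sub_card]; exact hb κ)
  exact sum_lt_sum (fun κ _ => (key κ).1) ⟨κ₀, mem_univ _, (key κ₀).2 hgap⟩

theorem exists_coloring_card_filter_le_add_one [Fintype E] [DecidableEq E] [Fintype ι]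
    (T : ι → Finset E)
    (hT : ∀ s : Finset E, ∃ b : E → Bool, ∀ κ, |imbalance b (T κ ∩ s)| ≤ 1) (hk : 0 < k) :
    ∃ c : E → Fin k, ∀ κ i j, #{e ∈ T κ | c e = i} ≤ #{e ∈ T κ | c e = j} + 1 := by
  have : Nonempty (E → Fin k) := ⟨fun _ => ⟨0, hk⟩⟩
  obtain ⟨c, hc⟩ := Finite.exists_min (energy T (k := k))
  refine ⟨c, fun κ i j => ?_⟩
  by_contra! hgap
  obtain ⟨b, hb⟩ := hT {e | c e = i ∨ c e = j}
  refine (energy_recolor_lt T c b (fun κ => ?_) hgap).not_ge (hc _)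
  simpa only [inter_filter, inter_univ] using hb κ

end Recolouring

lemma abs_card_filter_sub_div_lt {k : ℕ} {S : Finset E} {c : E → Fin k}
    (h : ∀ i j, #{e ∈ S | c e = i} ≤ #{e ∈ S | c e = j} + 1) (i : Fin k) :
    |(#{e ∈ S | c e = i} : ℝ) - #S / k| < 1 := by
  have hk : (0 : ℝ) < k := by exact_mod_cast i.pos
  have hS : (#S : ℝ) = ∑ l, (#{e ∈ S | c e = l} : ℝ) := by
    exact_mod_cast card_eq_sum_card_fiberwise fun e _ => mem_univ (c e)
  have hpair : ∀ l, |(#{e ∈ S | c e = i} : ℝ) - #{e ∈ S | c e = l}| ≤ 1 := fun l => by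
    have h1 : (#{e ∈ S | c e = i} : ℝ) ≤ #{e ∈ S | c e = l} + 1 := by exact_mod_cast h i l
    have h2 : (#{e ∈ S | c e = l} : ℝ) ≤ #{e ∈ S | c e = i} + 1 := by exact_mod_cast h l i
    rw [abs_le]; constructor <;> linarith
  have hsum : |∑ l, ((#{e ∈ S | c e = i} : ℝ) - #{e ∈ S | c e = l})| ≤ k - 1 := by
    refine (abs_sum_le_sum_abs _ _).trans ?_
    rw [← sum_erase_add _ _ (mem_univ i), sub_self, abs_zero, add_zero]
    calc _ ≤ ∑ l ∈ univ.erase i, (1 : ℝ) := sum_le_sum fun l _ => hpair l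
      _ = k - 1 := by
        rw [sum_const, card_erase_of_mem (mem_univ i), card_univ, Fintype.card_fin,
          nsmul_eq_mul, mul_one, Nat.cast_sub (Nat.one_le_of_lt i.pos), Nat.cast_one]
  have hmean : (#{e ∈ S | c e = i} : ℝ) - #S / k =
      (∑ l, ((#{e ∈ S | c e = i} : ℝ) - #{e ∈ S | c e = l})) / k := by
    rw [sum_sub_distrib, ← hS, sum_const, card_univ, Fintype.card_fin, nsmul_eq_mul]
    field_simp
  rw [hmean, abs_div, abs_of_pos hk, div_lt_one hk]
  linarith

/-- Directed equitable factorization with, in addition, equitable edge counts. -/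
theorem directed_equitable_factorization_sizes [Fintype V] [Fintype E] [DecidableEq V]
    (ends : E → V × V) (k : ℕ) (hk : 0 < k) :
    ∃ c : E → Fin k,
      (∀ v : V, ∀ i : Fin k,
        (|((outdeg ends (univ.filter fun e => c e = i) v : ℝ)) -
            (outdeg ends univ v : ℝ) / (k : ℝ)| < 1) ∧
        (|((indeg ends (univ.filter fun e => c e = i) v : ℝ)) -
            (indeg ends univ v : ℝ) / (k : ℝ)| < 1)) ∧
      (∀ i : Fin k,
        |(((univ.filter fun e : E => c e = i).card : ℝ)) -
          (Fintype.card E : ℝ) / (k : ℝ)| < 1) := by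
  classical
  let T : V ⊕ V ⊕ Unit → Finset E
    | .inl v => {e | (ends e).1 = v}
    | .inr (.inl v) => {e | (ends e).2 = v}
    | .inr (.inr ()) => univ
  have hT : ∀ s : Finset E, ∃ b : E → Bool, ∀ κ, |imbalance b (T κ ∩ s)| ≤ 1 := by
    intro s
    obtain ⟨b, hout, hin, hall⟩ :=
      exists_balanced_bool_coloring (fun e => (ends e).1) (fun e => (ends e).2) s
    refine ⟨b, ?_⟩
    rintro (v | v | -)
    · simpa [T, filter_inter] using hout v
    · simpa [T, filter_inter] using hin v
    · simpa [T] using hall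
  obtain ⟨c, hc⟩ := exists_coloring_card_filter_le_add_one T hT hk
  refine ⟨c, fun v i => ⟨?_, ?_⟩, fun i => ?_⟩
  · simpa only [outdeg, filter_comm] using
      abs_card_filter_sub_div_lt (S := {e | (ends e).1 = v}) (hc (.inl v)) i
  · simpa only [indeg, filter_comm] using
      abs_card_filter_sub_div_lt (S := {e | (ends e).2 = v}) (hc (.inr (.inl v))) i
  · simpa only [card_univ] using abs_card_filter_sub_div_lt (S := univ) (hc (.inr (.inr ()))) i
end

section
/- Let ε be a real number with 0 ≤ ε ≤ 1. Every multigraph G with all degrees even admits a spanning subgraph F with all degrees even such that for each vertex v, |d_F(v) − ε·d_G(v)| < 2. -/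
open Finset

variable {V E : Type*}

lemma exists_dependence {V' E' : Type*} [Fintype V'] [DecidableEq V']
    (A : V' → E' → ℤ) (W : Finset V') (Fr : Finset E') (hWne : W.Nonempty)
    (hWle : W.card ≤ Fr.card)
    (hpm : ∀ e ∈ Fr, ∃ p m : V', p ≠ m ∧ p ∈ W ∧ m ∈ W ∧
      ∀ v, A v e = (if v = p then 1 else 0) - (if v = m then 1 else 0)) :
    ∃ c : {x // x ∈ Fr} → ℝ,
      (∀ w ∈ W, ∑ i : {x // x ∈ Fr}, c i * (A w (i : E') : ℝ) = 0) ∧ ∃ i, c i ≠ 0 := by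
  classical
  set T : ({x // x ∈ W} → ℝ) →ₗ[ℝ] ℝ :=
    { toFun := fun x => ∑ w, x w
      map_add' := fun x y => by simp [Finset.sum_add_distrib]
      map_smul' := fun a x => by simp [Finset.mul_sum] } with hTdef
  have hWcard : Fintype.card {x // x ∈ W} = W.card := Fintype.card_coe W
  have hWpos : 0 < W.card := Finset.card_pos.2 hWne
  have hTsurj : LinearMap.range T = ⊤ := by
    rw [LinearMap.range_eq_top]
    intro rr
    refine ⟨fun _ => rr / (W.card : ℝ), ?_⟩
    have hTv : T (fun _ => rr / (W.card : ℝ))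
        = (Fintype.card {x // x ∈ W} : ℝ) * (rr / (W.card : ℝ)) := by
      simp [hTdef, Finset.sum_const, nsmul_eq_mul]
    rw [hTv, hWcard]
    field_simp
  have hrank : Module.finrank ℝ (LinearMap.ker T) + 1 = W.card := by
    have h := LinearMap.finrank_range_add_finrank_ker T
    rw [hTsurj, finrank_top, Module.finrank_self, Module.finrank_pi, hWcard] at h
    omega
  have hvmem : ∀ e : {x // x ∈ Fr},
      (fun w : {x // x ∈ W} => (A (w : V') (e : E') : ℝ)) ∈ LinearMap.ker T := by
    intro e
    obtain ⟨p, m, hne, hpW, hmW, hA⟩ := hpm (e : E') e.2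
    rw [LinearMap.mem_ker]
    show ∑ w : {x // x ∈ W}, (A (w : V') (e : E') : ℝ) = 0
    rw [Finset.sum_coe_sort W (fun v => (A v (e : E') : ℝ))]
    have hAc : ∀ v ∈ W, (A v (e : E') : ℝ)
        = (if v = p then (1 : ℝ) else 0) - (if v = m then 1 else 0) := by
      intro v _
      rw [hA v]
      push_cast
      ring
    rw [Finset.sum_congr rfl hAc, Finset.sum_sub_distrib,
      Finset.sum_ite_eq' W p (fun _ => (1 : ℝ)),
      Finset.sum_ite_eq' W m (fun _ => (1 : ℝ))]
    simp [hpW, hmW]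
  set vv : {x // x ∈ Fr} → LinearMap.ker T := fun e => ⟨_, hvmem e⟩ with hvvdef
  have hdep : ¬ LinearIndependent ℝ vv := by
    intro hli
    have hcard := hli.fintype_card_le_finrank
    rw [Fintype.card_coe] at hcard
    omega
  obtain ⟨c, hc0, i₀, hi₀⟩ := Fintype.not_linearIndependent_iff.1 hdep
  refine ⟨c, ?_, i₀, hi₀⟩
  intro w hw
  have h1 := congrArg (Subtype.val) hc0
  rw [AddSubmonoidClass.coe_finset_sum] at h1
  simp only [SetLike.val_smul, ZeroMemClass.coe_zero] at h1
  have h2 := congrFun h1 ⟨w, hw⟩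
  simp only [Finset.sum_apply, Pi.smul_apply, smul_eq_mul, Pi.zero_apply] at h2
  exact h2

lemma rounding {V' E' : Type*} [Fintype V'] [Fintype E'] [DecidableEq V'] [DecidableEq E']
    (A : V' → E' → ℤ)
    (hcol : ∀ e : E', ∃ p m : V', ∀ v, A v e = (if v = p then 1 else 0) - (if v = m then 1 else 0))
    (L U : E' → ℤ) (f : E' → ℝ) (hfL : ∀ e, (L e : ℝ) ≤ f e) (hfU : ∀ e, f e ≤ (U e : ℝ))
    (b : V' → ℤ) (hb : ∀ v, ∑ e, (A v e : ℝ) * f e = (b v : ℝ)) :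
    ∃ g : E' → ℤ, (∀ e, L e ≤ g e ∧ g e ≤ U e) ∧ ∀ v, (∑ e, A v e * g e) = b v := by
  classical
  suffices H : ∀ N (f : E' → ℝ),
      (univ.filter fun e => ¬ ∃ z : ℤ, f e = (z : ℝ)).card = N →
      (∀ e, (L e : ℝ) ≤ f e) → (∀ e, f e ≤ (U e : ℝ)) →
      (∀ v, ∑ e, (A v e : ℝ) * f e = (b v : ℝ)) →
      ∃ g : E' → ℤ, (∀ e, L e ≤ g e ∧ g e ≤ U e) ∧ ∀ v, (∑ e, A v e * g e) = b v by
    exact H _ f rfl hfL hfU hb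
  intro N
  induction N using Nat.strong_induction_on with
  | _ N ih =>
    intro f hN hfL hfU hb
    by_cases hFr0 : (univ.filter fun e => ¬ ∃ z : ℤ, f e = (z : ℝ)) = ∅
    · -- base case : all entries integral
      have hint : ∀ e, ∃ z : ℤ, f e = (z : ℝ) := by
        intro e
        by_contra h
        have : e ∈ (univ.filter fun e => ¬ ∃ z : ℤ, f e = (z : ℝ)) := by
          simp only [mem_filter, mem_univ, true_and]; exact h
        rw [hFr0] at this; exact absurd this (notMem_empty e)
      choose g hg using hint
      refine ⟨g, fun e => ?_, fun v => ?_⟩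
      · constructor
        · have := hfL e; rw [hg e] at this; exact_mod_cast this
        · have := hfU e; rw [hg e] at this; exact_mod_cast this
      · have : ((∑ e, A v e * g e : ℤ) : ℝ) = ((b v : ℤ) : ℝ) := by
          push_cast
          rw [← hb v]
          exact Finset.sum_congr rfl fun e _ => by rw [hg e]
        exact_mod_cast this
    · -- there is a fractional entry
      set Fr := univ.filter fun e => ¬ ∃ z : ℤ, f e = (z : ℝ) with hFrdef
      have hFrne : Fr.Nonempty := Finset.nonempty_of_ne_empty hFr0
      have hfFr : ∀ e ∉ Fr, ∃ z : ℤ, f e = (z : ℝ) := by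
        intro e he
        by_contra h
        exact he (mem_filter.2 ⟨mem_univ _, h⟩)
      by_cases hzero : ∃ e ∈ Fr, ∀ v, A v e = 0
      · -- a fractional entry in a zero column : set it to its lower bound
        obtain ⟨e₀, he₀, hA0⟩ := hzero
        set f' := Function.update f e₀ ((L e₀ : ℝ)) with hf'def
        have hf'val : ∀ e ≠ e₀, f' e = f e := fun e he => Function.update_of_ne he _ f
        have hf'e₀ : f' e₀ = (L e₀ : ℝ) := Function.update_self e₀ _ f
        have hsub : (univ.filter fun e => ¬ ∃ z : ℤ, f' e = (z : ℝ)) ⊆ Fr.erase e₀ := by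
          intro e he
          have hni := (mem_filter.1 he).2
          by_cases h : e = e₀
          · subst h; exact absurd ⟨L e, hf'e₀⟩ hni
          · refine mem_erase.2 ⟨h, mem_filter.2 ⟨mem_univ _, ?_⟩⟩
            rw [← hf'val e h]; exact hni
        have hlt : (univ.filter fun e => ¬ ∃ z : ℤ, f' e = (z : ℝ)).card < N := by
          calc (univ.filter fun e => ¬ ∃ z : ℤ, f' e = (z : ℝ)).card
              ≤ (Fr.erase e₀).card := Finset.card_le_card hsub
            _ < Fr.card := Finset.card_erase_lt_of_mem he₀
            _ = N := hN
        refine ih _ hlt f' rfl (fun e => ?_) (fun e => ?_) (fun v => ?_)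
        · by_cases h : e = e₀
          · subst h; rw [hf'e₀]
          · rw [hf'val e h]; exact hfL e
        · by_cases h : e = e₀
          · subst h; rw [hf'e₀]
            exact_mod_cast le_trans (hfL e) (hfU e)
          · rw [hf'val e h]; exact hfU e
        · rw [← hb v]
          refine Finset.sum_congr rfl fun e _ => ?_
          by_cases h : e = e₀
          · subst h; rw [hA0 v]; simp
          · rw [hf'val e h]
      · -- main case : every fractional column is nonzero
        push_neg at hzero
        have hpm : ∀ e ∈ Fr, ∃ p m : V', p ≠ m ∧
            ∀ v, A v e = (if v = p then 1 else 0) - (if v = m then 1 else 0) := by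
          intro e he
          obtain ⟨p, m, hA⟩ := hcol e
          refine ⟨p, m, ?_, hA⟩
          rintro rfl
          obtain ⟨v, hv⟩ := hzero e he
          simp [hA] at hv
        set W := univ.filter fun v => ∃ e ∈ Fr, A v e ≠ 0 with hWdef
        have hWne : W.Nonempty := by
          obtain ⟨e, he⟩ := hFrne
          obtain ⟨p, m, hne, hA⟩ := hpm e he
          exact ⟨p, mem_filter.2 ⟨mem_univ _, e, he, by simp [hA, hne]⟩⟩
        -- every vertex of W meets at least two fractional columns
        have hdeg : ∀ v ∈ W, 2 ≤ (Fr.filter fun e => A v e ≠ 0).card := by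
          intro v hv
          obtain ⟨e₁, he₁, hAe₁⟩ := (mem_filter.1 hv).2
          by_contra hlt
          push_neg at hlt
          have hle1 : (Fr.filter fun e => A v e ≠ 0).card ≤ 1 := by omega
          have hmem : e₁ ∈ Fr.filter fun e => A v e ≠ 0 := mem_filter.2 ⟨he₁, hAe₁⟩
          have huniq : ∀ e ∈ Fr, e ≠ e₁ → A v e = 0 := by
            intro e he hne
            by_contra hA
            exact hne (Finset.card_le_one.1 hle1 _ (mem_filter.2 ⟨he, hA⟩) _ hmem)
          have hApm : A v e₁ = 1 ∨ A v e₁ = -1 := by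
            obtain ⟨p, m, hne, hA⟩ := hpm e₁ he₁
            rw [hA] at hAe₁ ⊢
            split_ifs at hAe₁ ⊢ <;> omega
          set r : E' → ℤ :=
            fun e => if h : ∃ z : ℤ, f e = (z : ℝ) then A v e * h.choose else 0 with hrdef
          have hterm : ∀ e ∈ univ.erase e₁, (A v e : ℝ) * f e = (r e : ℝ) := by
            intro e he
            by_cases hi : ∃ z : ℤ, f e = (z : ℝ)
            · rw [hrdef]
              simp only [dif_pos hi]
              push_cast
              rw [← hi.choose_spec]
            · have heFr : e ∈ Fr := mem_filter.2 ⟨mem_univ _, hi⟩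
              have hA0 : A v e = 0 := huniq e heFr (mem_erase.1 he).1
              rw [hrdef]
              simp only [dif_neg hi]
              rw [hA0]
              simp
          have hsplit : (A v e₁ : ℝ) * f e₁ + ∑ e ∈ univ.erase e₁, (A v e : ℝ) * f e
              = (b v : ℝ) := by
            rw [← hb v]
            exact Finset.add_sum_erase univ (fun e => (A v e : ℝ) * f e) (mem_univ e₁)
          rw [Finset.sum_congr rfl hterm] at hsplit
          have hz : ∃ z : ℤ, f e₁ = (z : ℝ) := by
            have hval : (A v e₁ : ℝ) * f e₁
                = ((b v - ∑ e ∈ univ.erase e₁, r e : ℤ) : ℝ) := by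
              push_cast
              push_cast at hsplit
              linarith
            rcases hApm with h | h
            · refine ⟨b v - ∑ e ∈ univ.erase e₁, r e, ?_⟩
              rw [h] at hval
              push_cast at hval ⊢
              linarith
            · refine ⟨-(b v - ∑ e ∈ univ.erase e₁, r e), ?_⟩
              rw [h] at hval
              push_cast at hval ⊢
              linarith
          exact (mem_filter.1 he₁).2 hz
        -- each fractional column meets exactly two vertices of W
        have hcount : ∀ e ∈ Fr, (W.filter fun v => A v e ≠ 0).card = 2 := by
          intro e he
          obtain ⟨p, m, hne, hA⟩ := hpm e he
          have hpW : p ∈ W := mem_filter.2 ⟨mem_univ _, e, he, by simp [hA, hne]⟩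
          have hmW : m ∈ W := mem_filter.2 ⟨mem_univ _, e, he, by simp [hA, hne.symm]⟩
          have hset : (W.filter fun v => A v e ≠ 0) = {p, m} := by
            ext v
            simp only [mem_filter, mem_insert, mem_singleton]
            constructor
            · rintro ⟨-, hv⟩
              by_contra hc
              push_neg at hc
              simp [hA, hc.1, hc.2] at hv
            · rintro (rfl | rfl)
              · exact ⟨hpW, by simp [hA, hne]⟩
              · exact ⟨hmW, by simp [hA, hne.symm]⟩
          rw [hset, Finset.card_insert_of_notMem (by simpa using hne), Finset.card_singleton]
        have hWle : W.card ≤ Fr.card := by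
          have h1 : ∑ v ∈ W, (Fr.filter fun e => A v e ≠ 0).card
              = ∑ e ∈ Fr, (W.filter fun v => A v e ≠ 0).card := by
            simp only [Finset.card_filter]
            exact Finset.sum_comm
          have h2 : 2 * W.card ≤ ∑ v ∈ W, (Fr.filter fun e => A v e ≠ 0).card := by
            rw [mul_comm]
            calc W.card * 2 = ∑ _v ∈ W, 2 := by rw [Finset.sum_const, smul_eq_mul]
              _ ≤ _ := Finset.sum_le_sum hdeg
          have h3 : ∑ e ∈ Fr, (W.filter fun v => A v e ≠ 0).card = 2 * Fr.card := by
            rw [mul_comm]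
            calc ∑ e ∈ Fr, (W.filter fun v => A v e ≠ 0).card = ∑ _e ∈ Fr, 2 :=
                Finset.sum_congr rfl hcount
              _ = Fr.card * 2 := by rw [Finset.sum_const, smul_eq_mul]
          omega
        -- linear algebra : the fractional columns are linearly dependent
        obtain ⟨c, hc0, i₀, hi₀⟩ :=
          exists_dependence A W Fr hWne hWle (by
            intro e he
            obtain ⟨p, m, hne, hA⟩ := hpm e he
            exact ⟨p, m, hne, mem_filter.2 ⟨mem_univ _, e, he, by simp [hA, hne]⟩,
              mem_filter.2 ⟨mem_univ _, e, he, by simp [hA, hne.symm]⟩, hA⟩)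
        -- extend c to all columns
        set cE : E' → ℝ := fun e => if h : e ∈ Fr then c ⟨e, h⟩ else 0 with hcEdef
        have hcEnot : ∀ e ∉ Fr, cE e = 0 := fun e he => dif_neg he
        have hrel : ∀ v : V', ∑ e, cE e * (A v e : ℝ) = 0 := by
          intro v
          have hzer : ∀ e ∈ univ, e ∉ Fr → cE e * (A v e : ℝ) = 0 := by
            intro e _ he; rw [hcEnot e he, zero_mul]
          rw [← Finset.sum_subset (Finset.subset_univ Fr) hzer]
          have hcoe : ∑ e ∈ Fr, cE e * (A v e : ℝ)
              = ∑ i : {x // x ∈ Fr}, c i * (A v (i : E') : ℝ) := by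
            rw [← Finset.sum_coe_sort Fr (fun e => cE e * (A v e : ℝ))]
            refine Finset.sum_congr rfl fun i _ => ?_
            congr 1
            rw [hcEdef]
            simp only [dif_pos i.2]
          rw [hcoe]
          by_cases hvW : v ∈ W
          · exact hc0 v hvW
          · refine Finset.sum_eq_zero fun i _ => ?_
            have : A v (i : E') = 0 := by
              by_contra hA
              exact hvW (mem_filter.2 ⟨mem_univ _, (i : E'), i.2, hA⟩)
            rw [this]; simp
        -- the push
        have hi₀Fr : (i₀ : E') ∈ Fr := i₀.2
        set Fr' := Fr.filter fun e => cE e ≠ 0 with hFr'def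
        have hFr'ne : Fr'.Nonempty := by
          refine ⟨(i₀ : E'), mem_filter.2 ⟨hi₀Fr, ?_⟩⟩
          rw [hcEdef]
          simpa only [dif_pos i₀.2, Subtype.coe_eta] using hi₀
        have hstrict : ∀ e ∈ Fr, (L e : ℝ) < f e ∧ f e < (U e : ℝ) := by
          intro e he
          have hni := (mem_filter.1 he).2
          constructor
          · rcases lt_or_eq_of_le (hfL e) with h | h
            · exact h
            · exact absurd ⟨L e, h.symm⟩ hni
          · rcases lt_or_eq_of_le (hfU e) with h | h
            · exact h
            · exact absurd ⟨U e, h⟩ hni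
        set gap : E' → ℝ := fun e =>
          if 0 < cE e then ((U e : ℝ) - f e) / cE e else ((L e : ℝ) - f e) / cE e with hgapdef
        have hgappos : ∀ e ∈ Fr', 0 < gap e := by
          intro e he
          obtain ⟨heFr, hcne⟩ := mem_filter.1 he
          obtain ⟨hL, hU⟩ := hstrict e heFr
          rw [hgapdef]
          rcases lt_or_gt_of_ne hcne with h | h
          · simp only [if_neg (not_lt.2 h.le)]
            exact div_pos_of_neg_of_neg (by linarith) h
          · simp only [if_pos h]
            exact div_pos (by linarith) h
        set δ := Fr'.inf' hFr'ne gap with hδdef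
        have hδpos : 0 < δ := (Finset.lt_inf'_iff hFr'ne).2 hgappos
        set f' : E' → ℝ := fun e => f e + δ * cE e with hf'def
        have hf'not : ∀ e ∉ Fr', f' e = f e := by
          intro e he
          have : cE e = 0 := by
            by_cases h : e ∈ Fr
            · by_contra hc
              exact he (mem_filter.2 ⟨h, hc⟩)
            · exact hcEnot e h
          rw [hf'def]; simp [this]
        have hbd : ∀ e, (L e : ℝ) ≤ f' e ∧ f' e ≤ (U e : ℝ) := by
          intro e
          by_cases he : e ∈ Fr'
          · have hδle : δ ≤ gap e := Finset.inf'_le _ he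
            obtain ⟨heFr, hcne⟩ := mem_filter.1 he
            obtain ⟨hL, hU⟩ := hstrict e heFr
            rw [hf'def]
            simp only
            rcases lt_or_gt_of_ne hcne with h | h
            · have hgape : gap e = ((L e : ℝ) - f e) / cE e := by
                rw [hgapdef]; simp only [if_neg (not_lt.2 h.le)]
              have h1 : gap e * cE e ≤ δ * cE e :=
                mul_le_mul_of_nonpos_right hδle h.le
              rw [hgape, div_mul_cancel₀ _ (ne_of_lt h)] at h1
              constructor
              · linarith
              · nlinarith
            · have hgape : gap e = ((U e : ℝ) - f e) / cE e := by
                rw [hgapdef]; simp only [if_pos h]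
              have h1 : δ * cE e ≤ gap e * cE e :=
                mul_le_mul_of_nonneg_right hδle h.le
              rw [hgape, div_mul_cancel₀ _ (ne_of_gt h)] at h1
              constructor
              · nlinarith
              · linarith
          · rw [hf'not e he]; exact ⟨hfL e, hfU e⟩
        have hb' : ∀ v, ∑ e, (A v e : ℝ) * f' e = (b v : ℝ) := by
          intro v
          have hterm : ∀ e ∈ univ, (A v e : ℝ) * f' e
              = (A v e : ℝ) * f e + δ * (cE e * (A v e : ℝ)) := by
            intro e _
            rw [hf'def]; ring
          rw [Finset.sum_congr rfl hterm, Finset.sum_add_distrib, ← Finset.mul_sum,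
            hrel v, hb v, mul_zero, add_zero]
        obtain ⟨estar, hestar, hmin⟩ := Finset.exists_mem_eq_inf' hFr'ne gap
        have hδeq : δ = gap estar := by rw [hδdef, hmin]
        have hintstar : ∃ z : ℤ, f' estar = (z : ℝ) := by
          obtain ⟨heFr, hcne⟩ := mem_filter.1 hestar
          rw [hf'def]
          simp only
          rw [hδeq, hgapdef]
          rcases lt_or_gt_of_ne hcne with h | h
          · simp only [if_neg (not_lt.2 h.le)]
            rw [div_mul_cancel₀ _ (ne_of_lt h)]
            exact ⟨L estar, by ring⟩
          · simp only [if_pos h]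
            rw [div_mul_cancel₀ _ (ne_of_gt h)]
            exact ⟨U estar, by ring⟩
        have hsub : (univ.filter fun e => ¬ ∃ z : ℤ, f' e = (z : ℝ)) ⊆ Fr.erase estar := by
          intro e he
          have hni := (mem_filter.1 he).2
          refine mem_erase.2 ⟨?_, ?_⟩
          · rintro rfl; exact hni hintstar
          · by_contra heFr
            refine hni ?_
            have hnotFr' : e ∉ Fr' := fun h => heFr (mem_filter.1 h).1
            rw [hf'not e hnotFr']
            exact hfFr e heFr
        have hlt : (univ.filter fun e => ¬ ∃ z : ℤ, f' e = (z : ℝ)).card < N := by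
          calc (univ.filter fun e => ¬ ∃ z : ℤ, f' e = (z : ℝ)).card
              ≤ (Fr.erase estar).card := Finset.card_le_card hsub
            _ < Fr.card := Finset.card_erase_lt_of_mem (mem_filter.1 hestar).1
            _ = N := hN
        exact ih _ hlt f' rfl (fun e => (hbd e).1) (fun e => (hbd e).2) hb'

section helpers

lemma card_filter_congr {α : Type*} [Fintype α] {p q : α → Prop}
    [DecidablePred p] [DecidablePred q] (h : ∀ a, p a ↔ q a) :
    (univ.filter p).card = (univ.filter q).card :=
  congrArg Finset.card (Finset.filter_congr fun a _ => h a)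

lemma sum_indicator_mul {α : Type*} [Fintype α] (P : α → Prop) [DecidablePred P]
    (g : α → ℤ) (hg : ∀ a, g a = 0 ∨ g a = 1) :
    ∑ a, (if P a then (1 : ℤ) else 0) * g a
      = ((univ.filter fun a => P a ∧ g a = 1).card : ℤ) := by
  classical
  rw [Finset.card_filter]
  push_cast
  refine Finset.sum_congr rfl fun a _ => ?_
  rcases hg a with h | h <;> by_cases hp : P a <;> simp [h, hp]

end helpers

/-- Every Eulerian multigraph has an even factor whose degrees are within `2` of
`ε` times the corresponding degrees. -/
theorem even_epsilon_factor [Fintype V] [Fintype E] [DecidableEq V]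
    (ends : E → V × V) (ε : ℝ) (hε0 : 0 ≤ ε) (hε1 : ε ≤ 1)
    (heven : ∀ v : V, Even (mdeg ends univ v)) :
    ∃ F : Finset E, ∀ v : V,
      Even (mdeg ends F v) ∧
      |((mdeg ends F v : ℝ)) - ε * (mdeg ends univ v : ℝ)| < 2 := by
  classical
  -- endpoint counts
  set t : V → ℕ := fun v => (univ.filter fun e => (ends e).1 = v).card with htdef
  set hd : V → ℕ := fun v => (univ.filter fun e => (ends e).2 = v).card with hhddef
  have hmdeg_eq : ∀ v, mdeg ends univ v = t v + hd v := fun v => rfl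
  -- step 1 : Eulerian orientation via rounding
  set A1 : V → E → ℤ := fun v e =>
    (if v = (ends e).1 then 1 else 0) - (if v = (ends e).2 then 1 else 0) with hA1def
  set b1 : V → ℤ := fun v => ((t v : ℤ) - (hd v : ℤ)) / 2 with hb1def
  have hb2 : ∀ v, 2 * b1 v = (t v : ℤ) - (hd v : ℤ) := by
    intro v
    refine Int.two_mul_ediv_two_of_even ?_
    obtain ⟨k, hk⟩ := heven v
    rw [hmdeg_eq v] at hk
    exact ⟨(k : ℤ) - (hd v : ℤ), by push_cast; omega⟩
  have hsZ : ∀ v, ∑ e, A1 v e = (t v : ℤ) - (hd v : ℤ) := by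
    intro v
    simp only [hA1def]
    rw [Finset.sum_sub_distrib, Finset.sum_boole, Finset.sum_boole]
    have e1 : (univ.filter fun e => v = (ends e).1).card = t v :=
      card_filter_congr fun e => eq_comm
    have e2 : (univ.filter fun e => v = (ends e).2).card = hd v :=
      card_filter_congr fun e => eq_comm
    rw [e1, e2]
  have hb1sum : ∀ v, ∑ e, (A1 v e : ℝ) * (1/2 : ℝ) = (b1 v : ℝ) := by
    intro v
    rw [← Finset.sum_mul]
    have hcast : ∑ e, (A1 v e : ℝ) = (t v : ℝ) - (hd v : ℝ) := by
      have h0 : ((∑ e, A1 v e : ℤ) : ℝ) = (((t v : ℤ) - (hd v : ℤ) : ℤ) : ℝ) := by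
        rw [hsZ v]
      push_cast at h0
      convert h0 using 1
    have h2 : (2 : ℝ) * (b1 v : ℝ) = (t v : ℝ) - (hd v : ℝ) := by exact_mod_cast hb2 v
    rw [hcast]
    linarith
  obtain ⟨g, hgbd, hgsum⟩ := rounding A1
    (fun e => ⟨(ends e).1, (ends e).2, fun v => rfl⟩)
    (fun _ => 0) (fun _ => 1) (fun _ => (1/2 : ℝ))
    (by intro e; norm_num) (by intro e; norm_num) b1 hb1sum
  have hg01 : ∀ e, g e = 0 ∨ g e = 1 := by
    intro e
    have := hgbd e
    omega
  set tl : E → V := fun e => if g e = 1 then (ends e).1 else (ends e).2 with htldef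
  set hdv : E → V := fun e => if g e = 1 then (ends e).2 else (ends e).1 with hhdvdef
  -- row identities for the orientation
  have hrow1 : ∀ v, ((univ.filter fun e => (v = (ends e).1) ∧ g e = 1).card : ℤ)
      - ((univ.filter fun e => (v = (ends e).2) ∧ g e = 1).card : ℤ) = b1 v := by
    intro v
    have hs := hgsum v
    simp only [hA1def] at hs
    rw [← hs, ← sum_indicator_mul (fun e => v = (ends e).1) g hg01,
      ← sum_indicator_mul (fun e => v = (ends e).2) g hg01, ← Finset.sum_sub_distrib]
    exact Finset.sum_congr rfl fun e _ => by ring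
  -- splitting of endpoint counts by orientation
  have hsplit1 : ∀ v, (univ.filter fun e => (v = (ends e).1) ∧ g e = 1).card
      + (univ.filter fun e => (v = (ends e).1) ∧ ¬ g e = 1).card = t v := by
    intro v
    have h := Finset.card_filter_add_card_filter_not
      (s := univ.filter fun e => v = (ends e).1) (p := fun e => g e = 1)
    rw [Finset.filter_filter, Finset.filter_filter] at h
    rw [h]
    exact card_filter_congr fun e => eq_comm
  have hsplit2 : ∀ v, (univ.filter fun e => (v = (ends e).2) ∧ g e = 1).card
      + (univ.filter fun e => (v = (ends e).2) ∧ ¬ g e = 1).card = hd v := by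
    intro v
    have h := Finset.card_filter_add_card_filter_not
      (s := univ.filter fun e => v = (ends e).2) (p := fun e => g e = 1)
    rw [Finset.filter_filter, Finset.filter_filter] at h
    rw [h]
    exact card_filter_congr fun e => eq_comm
  -- out-degrees and in-degrees
  have hn1 : ∀ v, ((univ.filter fun e => tl e = v).card : ℤ) = b1 v + (hd v : ℤ) := by
    intro v
    have h1 : (univ.filter fun e => tl e = v)
        = (univ.filter fun e => ((v = (ends e).1) ∧ g e = 1) ∨ ((v = (ends e).2) ∧ ¬ g e = 1)) := by
      refine Finset.filter_congr fun e _ => ?_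
      rw [htldef]
      rcases hg01 e with hge | hge <;> simp [hge, eq_comm]
    rw [h1, Finset.filter_or, Finset.card_union_of_disjoint]
    · have ha := hrow1 v
      have hb := hsplit2 v
      push_cast
      omega
    · rw [Finset.disjoint_left]
      intro a ha hb
      exact (mem_filter.1 hb).2.2 (mem_filter.1 ha).2.2
  have hn2 : ∀ v, ((univ.filter fun e => hdv e = v).card : ℤ) = (t v : ℤ) - b1 v := by
    intro v
    have h1 : (univ.filter fun e => hdv e = v)
        = (univ.filter fun e => ((v = (ends e).2) ∧ g e = 1) ∨ ((v = (ends e).1) ∧ ¬ g e = 1)) := by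
      refine Finset.filter_congr fun e _ => ?_
      rw [hhdvdef]
      rcases hg01 e with hge | hge <;> simp [hge, eq_comm]
    rw [h1, Finset.filter_or, Finset.card_union_of_disjoint]
    · have ha := hrow1 v
      have hb := hsplit1 v
      push_cast
      omega
    · rw [Finset.disjoint_left]
      intro a ha hb
      exact (mem_filter.1 hb).2.2 (mem_filter.1 ha).2.2
  set nn : V → ℕ := fun v => (univ.filter fun e => tl e = v).card with hnndef
  have hnn : ∀ v, ((univ.filter fun e => hdv e = v).card : ℤ) = (nn v : ℤ) := by
    intro v
    rw [hn2 v, hnndef]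
    simp only
    rw [hn1 v]
    have := hb2 v
    omega
  have hmdeg_univ : ∀ v, ((mdeg ends univ v : ℕ) : ℤ) = 2 * (nn v : ℤ) := by
    intro v
    rw [hmdeg_eq v, hnndef]
    simp only
    rw [hn1 v]
    have := hb2 v
    push_cast
    omega
  -- step 2 : the circulation problem
  set p2 : E ⊕ V → V ⊕ V :=
    Sum.elim (fun e => Sum.inl (tl e)) (fun v => Sum.inr v) with hp2def
  set m2 : E ⊕ V → V ⊕ V :=
    Sum.elim (fun e => Sum.inr (hdv e)) (fun v => Sum.inl v) with hm2def
  set A2 : V ⊕ V → E ⊕ V → ℤ := fun w x =>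
    (if w = p2 x then 1 else 0) - (if w = m2 x then 1 else 0) with hA2def
  set L2 : E ⊕ V → ℤ :=
    Sum.elim (fun _ => 0) (fun v => ⌊ε * (nn v : ℝ)⌋) with hL2def
  set U2 : E ⊕ V → ℤ :=
    Sum.elim (fun _ => 1) (fun v => ⌈ε * (nn v : ℝ)⌉) with hU2def
  set f2 : E ⊕ V → ℝ :=
    Sum.elim (fun _ => ε) (fun v => ε * (nn v : ℝ)) with hf2def
  have hfL2 : ∀ x, (L2 x : ℝ) ≤ f2 x := by
    intro x
    cases x with
    | inl e => simpa [hL2def, hf2def] using hε0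
    | inr v => simpa [hL2def, hf2def] using Int.floor_le (ε * (nn v : ℝ))
  have hfU2 : ∀ x, f2 x ≤ (U2 x : ℝ) := by
    intro x
    cases x with
    | inl e => simpa [hU2def, hf2def] using hε1
    | inr v => simpa [hU2def, hf2def] using Int.le_ceil (ε * (nn v : ℝ))
  have hb2sum : ∀ w, ∑ x, (A2 w x : ℝ) * f2 x = (((0 : V ⊕ V → ℤ) w : ℤ) : ℝ) := by
    intro w
    rw [Fintype.sum_sum_type]
    cases w with
    | inl v =>
      have h1 : ∀ e : E, (A2 (Sum.inl v) (Sum.inl e) : ℝ) * f2 (Sum.inl e)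
          = (if v = tl e then (1 : ℝ) else 0) * ε := by
        intro e
        simp [hA2def, hp2def, hm2def, hf2def]
      have h2 : ∀ w' : V, (A2 (Sum.inl v) (Sum.inr w') : ℝ) * f2 (Sum.inr w')
          = -((if v = w' then (1 : ℝ) else 0) * (ε * (nn w' : ℝ))) := by
        intro w'
        simp [hA2def, hp2def, hm2def, hf2def]
      rw [Finset.sum_congr rfl fun e _ => h1 e, Finset.sum_congr rfl fun w' _ => h2 w']
      rw [← Finset.sum_mul, Finset.sum_boole]
      have e1 : (univ.filter fun e => v = tl e).card = nn v := by
        rw [hnndef]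
        exact card_filter_congr fun e => eq_comm
      rw [e1]
      rw [Finset.sum_neg_distrib]
      have h3 : ∑ w' : V, (if v = w' then (1 : ℝ) else 0) * (ε * (nn w' : ℝ))
          = ε * (nn v : ℝ) := by
        simp [ite_mul, Finset.sum_ite_eq]
      rw [h3]
      simp
      ring
    | inr v =>
      have h1 : ∀ e : E, (A2 (Sum.inr v) (Sum.inl e) : ℝ) * f2 (Sum.inl e)
          = -((if v = hdv e then (1 : ℝ) else 0) * ε) := by
        intro e
        simp [hA2def, hp2def, hm2def, hf2def]
      have h2 : ∀ w' : V, (A2 (Sum.inr v) (Sum.inr w') : ℝ) * f2 (Sum.inr w')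
          = (if v = w' then (1 : ℝ) else 0) * (ε * (nn w' : ℝ)) := by
        intro w'
        simp [hA2def, hp2def, hm2def, hf2def]
      rw [Finset.sum_congr rfl fun e _ => h1 e, Finset.sum_congr rfl fun w' _ => h2 w']
      rw [Finset.sum_neg_distrib, ← Finset.sum_mul, Finset.sum_boole]
      have e1 : (univ.filter fun e => v = hdv e).card = nn v := by
        have := hnn v
        have e2 : (univ.filter fun e => v = hdv e).card
            = (univ.filter fun e => hdv e = v).card :=
          card_filter_congr fun e => eq_comm
        rw [e2]
        exact_mod_cast this
      rw [e1]
      have h3 : ∑ w' : V, (if v = w' then (1 : ℝ) else 0) * (ε * (nn w' : ℝ))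
          = ε * (nn v : ℝ) := by
        simp [ite_mul, Finset.sum_ite_eq]
      rw [h3]
      simp
      ring
  obtain ⟨u, hubd, husum⟩ := rounding A2
    (fun x => ⟨p2 x, m2 x, fun w => rfl⟩) L2 U2 f2 hfL2 hfU2 (0 : V ⊕ V → ℤ) hb2sum
  have hu01 : ∀ e : E, u (Sum.inl e) = 0 ∨ u (Sum.inl e) = 1 := by
    intro e
    have h := hubd (Sum.inl e)
    simp only [hL2def, hU2def, Sum.elim_inl] at h
    omega
  -- row identities for the circulation
  have hrowt : ∀ v, ((univ.filter fun e => (v = tl e) ∧ u (Sum.inl e) = 1).card : ℤ)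
      = u (Sum.inr v) := by
    intro v
    have hs := husum (Sum.inl v)
    rw [Fintype.sum_sum_type] at hs
    have h1 : ∀ e : E, A2 (Sum.inl v) (Sum.inl e) * u (Sum.inl e)
        = (if v = tl e then (1 : ℤ) else 0) * u (Sum.inl e) := by
      intro e
      simp [hA2def, hp2def, hm2def]
    have h2 : ∀ w' : V, A2 (Sum.inl v) (Sum.inr w') * u (Sum.inr w')
        = -((if v = w' then (1 : ℤ) else 0) * u (Sum.inr w')) := by
      intro w'
      simp [hA2def, hp2def, hm2def]
    rw [Finset.sum_congr rfl fun e _ => h1 e, Finset.sum_congr rfl fun w' _ => h2 w'] at hs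
    rw [sum_indicator_mul (fun e => v = tl e) (fun e => u (Sum.inl e)) hu01] at hs
    rw [Finset.sum_neg_distrib] at hs
    have h3 : ∑ w' : V, (if v = w' then (1 : ℤ) else 0) * u (Sum.inr w') = u (Sum.inr v) := by
      simp [ite_mul, Finset.sum_ite_eq]
    rw [h3] at hs
    simp only [Pi.zero_apply] at hs
    omega
  have hrowh : ∀ v, ((univ.filter fun e => (v = hdv e) ∧ u (Sum.inl e) = 1).card : ℤ)
      = u (Sum.inr v) := by
    intro v
    have hs := husum (Sum.inr v)
    rw [Fintype.sum_sum_type] at hs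
    have h1 : ∀ e : E, A2 (Sum.inr v) (Sum.inl e) * u (Sum.inl e)
        = -((if v = hdv e then (1 : ℤ) else 0) * u (Sum.inl e)) := by
      intro e
      simp [hA2def, hp2def, hm2def]
    have h2 : ∀ w' : V, A2 (Sum.inr v) (Sum.inr w') * u (Sum.inr w')
        = (if v = w' then (1 : ℤ) else 0) * u (Sum.inr w') := by
      intro w'
      simp [hA2def, hp2def, hm2def]
    rw [Finset.sum_congr rfl fun e _ => h1 e, Finset.sum_congr rfl fun w' _ => h2 w'] at hs
    rw [Finset.sum_neg_distrib] at hs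
    rw [sum_indicator_mul (fun e => v = hdv e) (fun e => u (Sum.inl e)) hu01] at hs
    have h3 : ∑ w' : V, (if v = w' then (1 : ℤ) else 0) * u (Sum.inr w') = u (Sum.inr v) := by
      simp [ite_mul, Finset.sum_ite_eq]
    rw [h3] at hs
    simp only [Pi.zero_apply] at hs
    omega
  -- the even factor
  refine ⟨univ.filter fun e => u (Sum.inl e) = 1, fun v => ?_⟩
  have hswap : (univ.filter fun e => (u (Sum.inl e) = 1) ∧ (ends e).1 = v).card
        + (univ.filter fun e => (u (Sum.inl e) = 1) ∧ (ends e).2 = v).card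
      = (univ.filter fun e => (u (Sum.inl e) = 1) ∧ tl e = v).card
        + (univ.filter fun e => (u (Sum.inl e) = 1) ∧ hdv e = v).card := by
    simp only [Finset.card_filter]
    rw [← Finset.sum_add_distrib, ← Finset.sum_add_distrib]
    refine Finset.sum_congr rfl fun e _ => ?_
    rcases hg01 e with hge | hge <;>
      by_cases h1 : (ends e).1 = v <;> by_cases h2 : (ends e).2 = v <;>
        simp [htldef, hhdvdef, hge, h1, h2] <;> omega
  have hmF : mdeg ends (univ.filter fun e => u (Sum.inl e) = 1) v
      = (univ.filter fun e => (u (Sum.inl e) = 1) ∧ (ends e).1 = v).card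
        + (univ.filter fun e => (u (Sum.inl e) = 1) ∧ (ends e).2 = v).card := by
    simp only [mdeg, Finset.filter_filter]
  have hFdeg : ((mdeg ends (univ.filter fun e => u (Sum.inl e) = 1) v : ℕ) : ℤ)
      = 2 * u (Sum.inr v) := by
    rw [hmF, hswap]
    have e1 : (univ.filter fun e => (u (Sum.inl e) = 1) ∧ tl e = v).card
        = (univ.filter fun e => (v = tl e) ∧ u (Sum.inl e) = 1).card :=
      card_filter_congr fun e => ⟨fun h => ⟨h.2.symm, h.1⟩, fun h => ⟨h.2, h.1.symm⟩⟩
    have e2 : (univ.filter fun e => (u (Sum.inl e) = 1) ∧ hdv e = v).card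
        = (univ.filter fun e => (v = hdv e) ∧ u (Sum.inl e) = 1).card :=
      card_filter_congr fun e => ⟨fun h => ⟨h.2.symm, h.1⟩, fun h => ⟨h.2, h.1.symm⟩⟩
    rw [e1, e2]
    have := hrowt v
    have := hrowh v
    push_cast
    omega
  constructor
  · rw [← Int.even_coe_nat, hFdeg]
    exact even_two_mul _
  · have hyl := (hubd (Sum.inr v)).1
    have hyu := (hubd (Sum.inr v)).2
    simp only [hL2def, hU2def, Sum.elim_inr] at hyl hyu
    have hfl : ε * (nn v : ℝ) - 1 < (u (Sum.inr v) : ℝ) := by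
      have ha : ε * (nn v : ℝ) - 1 < (⌊ε * (nn v : ℝ)⌋ : ℝ) := Int.sub_one_lt_floor _
      have hb : ((⌊ε * (nn v : ℝ)⌋ : ℤ) : ℝ) ≤ (u (Sum.inr v) : ℝ) := by exact_mod_cast hyl
      linarith
    have hfu : (u (Sum.inr v) : ℝ) < ε * (nn v : ℝ) + 1 := by
      have ha : ((⌈ε * (nn v : ℝ)⌉ : ℤ) : ℝ) < ε * (nn v : ℝ) + 1 := Int.ceil_lt_add_one _
      have hb : (u (Sum.inr v) : ℝ) ≤ ((⌈ε * (nn v : ℝ)⌉ : ℤ) : ℝ) := by exact_mod_cast hyu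
      linarith
    have hFdegR : ((mdeg ends (univ.filter fun e => u (Sum.inl e) = 1) v : ℕ) : ℝ)
        = 2 * (u (Sum.inr v) : ℝ) := by exact_mod_cast hFdeg
    have hUdegR : ((mdeg ends univ v : ℕ) : ℝ) = 2 * (nn v : ℝ) := by
      exact_mod_cast hmdeg_univ v
    rw [hFdegR, hUdegR, abs_lt]
    constructor <;> linarith
end
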